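/- arXiv:2302.11836 — 9 statements merged into one kernel-verified Lean document; each statement's English description precedes it below -/
import Mathlib

section
/- Let A ∈ ℝ^{n×p} admit the compact singular value decomposition A = V₁Σ₁U₁ᵀ, where U₁ ∈ ℝ^{p×r} and V₁ ∈ ℝ^{n×r} satisfy U₁ᵀU₁ = I_r and V₁ᵀV₁ = I_r and Σ₁ = diag(σ₁,…,σ_r) with each σ_i > 0; set D₁ = Σ₁². Let ε ∈ ℝ^n, w̄ ∈ ℝ^p, and w₀ ∈ ℝ^p with w₀ = U₁U₁ᵀw₀. Define G(w) = AᵀA(w − w̄) − Aᵀε and the SAM sequence w_{k+1} = w_k − η·G(w_k + ρ·G(w_k)) started at w₀. Then for every k ≥ 0, w_k = U₁(I − (I − ηD₁ − ηρD₁²)^k)(U₁ᵀw̄ + Σ₁⁻¹V₁ᵀε) + U₁(I − ηD₁ − ηρD₁²)^k U₁ᵀ w₀. -/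
open Matrix

set_option maxHeartbeats 1000000 in
/-- Closed form for the SAM iterates on the least-squares loss, in terms of the
compact SVD `A = V₁Σ₁U₁ᵀ`. -/
theorem sam_least_squares_closed_form (n p r : ℕ)
    (A : Matrix (Fin n) (Fin p) ℝ)
    (U1 : Matrix (Fin p) (Fin r) ℝ) (V1 : Matrix (Fin n) (Fin r) ℝ)
    (s : Fin r → ℝ) (hs : ∀ i, 0 < s i)
    (hU : U1ᵀ * U1 = 1) (hV : V1ᵀ * V1 = 1)
    (hA : A = V1 * Matrix.diagonal s * U1ᵀ)
    (D1 : Matrix (Fin r) (Fin r) ℝ)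
    (hD1 : D1 = Matrix.diagonal fun i => s i ^ 2)
    (ε : Fin n → ℝ) (wbar w0 : Fin p → ℝ)
    (hw0proj : w0 = (U1 * U1ᵀ).mulVec w0)
    (η ρ : ℝ)
    (G : (Fin p → ℝ) → (Fin p → ℝ))
    (hG : ∀ w, G w = (Aᵀ * A).mulVec (w - wbar) - Aᵀ.mulVec ε)
    (w : ℕ → Fin p → ℝ)
    (hw0 : w 0 = w0)
    (hw : ∀ k, w (k + 1) = w k - η • G (w k + ρ • G (w k))) :
    ∀ k : ℕ,
      w k = (U1 * (1 - (1 - η • D1 - (η * ρ) • D1 ^ 2) ^ k)).mulVec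
              (U1ᵀ.mulVec wbar + ((Matrix.diagonal s)⁻¹ * V1ᵀ).mulVec ε)
            + (U1 * (1 - η • D1 - (η * ρ) • D1 ^ 2) ^ k * U1ᵀ).mulVec w0 := by
  set M : Matrix (Fin r) (Fin r) ℝ := 1 - η • D1 - (η * ρ) • D1 ^ 2 with hM
  set b : Fin r → ℝ := U1ᵀ.mulVec wbar + ((Matrix.diagonal s)⁻¹ * V1ᵀ).mulVec ε with hb
  set c : Fin r → ℝ := U1ᵀ.mulVec w0 with hc
  -- transpose of A
  have hAt : Aᵀ = U1 * Matrix.diagonal s * V1ᵀ := by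
    rw [hA]; simp [Matrix.transpose_mul, Matrix.mul_assoc]
  -- AᵀA
  have hAtA : Aᵀ * A = U1 * D1 * U1ᵀ := by
    rw [hAt, hA, hD1]
    calc U1 * Matrix.diagonal s * V1ᵀ * (V1 * Matrix.diagonal s * U1ᵀ)
        = U1 * (Matrix.diagonal s * ((V1ᵀ * V1) * Matrix.diagonal s)) * U1ᵀ := by
          simp only [Matrix.mul_assoc]
      _ = U1 * Matrix.diagonal (fun i => s i ^ 2) * U1ᵀ := by
          rw [hV, Matrix.one_mul, Matrix.diagonal_mul_diagonal]
          simp [Matrix.mul_assoc, sq]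
  -- inverse of diagonal s
  have hdiaginv : (Matrix.diagonal s)⁻¹ = Matrix.diagonal (fun i => (s i)⁻¹) := by
    apply Matrix.inv_eq_right_inv
    rw [Matrix.diagonal_mul_diagonal]
    have : (fun i => s i * (s i)⁻¹) = fun _ => (1 : ℝ) := by
      funext i; exact mul_inv_cancel₀ (hs i).ne'
    rw [this, Matrix.diagonal_one]
  have hDinv : D1 * (Matrix.diagonal s)⁻¹ = Matrix.diagonal s := by
    rw [hD1, hdiaginv, Matrix.diagonal_mul_diagonal]
    congr 1; funext i
    have : s i ≠ 0 := (hs i).ne'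
    field_simp [sq]
  have hDb : D1.mulVec b = (D1 * U1ᵀ).mulVec wbar + (Matrix.diagonal s * V1ᵀ).mulVec ε := by
    rw [hb, Matrix.mulVec_add]
    simp only [Matrix.mulVec_mulVec, ← Matrix.mul_assoc, hDinv]
  -- G on the range of U1
  have hGU : ∀ u : Fin r → ℝ, G (U1.mulVec u) = U1.mulVec (D1.mulVec (u - b)) := by
    intro u
    rw [hG, hAtA, hAt]
    simp only [Matrix.mulVec_sub, Matrix.mulVec_add, Matrix.mulVec_mulVec, hDb,
      Matrix.mul_assoc, hU, Matrix.mul_one]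
    abel
  -- the one-step map on coordinates
  have hMstep : ∀ x : Fin r → ℝ,
      M.mulVec x = x - η • D1.mulVec (x + ρ • D1.mulVec x) := by
    intro x
    have h2 : (D1 ^ 2).mulVec x = D1.mulVec (D1.mulVec x) := by
      rw [Matrix.mulVec_mulVec, ← sq]
    rw [hM]
    simp only [Matrix.sub_mulVec, Matrix.one_mulVec, Matrix.smul_mulVec, h2,
      Matrix.mulVec_add, Matrix.mulVec_smul]
    module
  -- main induction : w k = U1 (b + M^k (c - b))
  have key : ∀ k : ℕ, w k = U1.mulVec (b + (M ^ k).mulVec (c - b)) := by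
    intro k
    induction k with
    | zero =>
      rw [hw0, pow_zero, Matrix.one_mulVec]
      rw [show b + (c - b) = c by abel, hc, Matrix.mulVec_mulVec]
      exact hw0proj
    | succ k ih =>
      set d : Fin r → ℝ := (M ^ k).mulVec (c - b) with hd
      have e0 : b + d - b = d := by abel
      have g1 : G (w k) = U1.mulVec (D1.mulVec d) := by rw [ih, hGU, e0]
      have g2 : w k + ρ • G (w k) = U1.mulVec (b + d + ρ • D1.mulVec d) := by
        rw [g1, ih]
        simp only [Matrix.mulVec_add, Matrix.mulVec_smul]
      have g3 : G (w k + ρ • G (w k)) = U1.mulVec (D1.mulVec (d + ρ • D1.mulVec d)) := by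
        rw [g2, hGU]
        congr 2
        abel
      rw [hw k, g3, ih]
      have e4 : (M ^ (k + 1)).mulVec (c - b) = M.mulVec d := by
        rw [hd, Matrix.mulVec_mulVec, ← pow_succ']
      have e5 : b + (M ^ (k + 1)).mulVec (c - b)
          = (b + d) - η • D1.mulVec (d + ρ • D1.mulVec d) := by
        rw [e4, hMstep]
        abel
      rw [e5]
      simp only [Matrix.mulVec_sub, Matrix.mulVec_smul]
  -- conclude
  intro k
  rw [key k]
  have r1 : (U1 * (1 - M ^ k)).mulVec b = U1.mulVec ((1 - M ^ k).mulVec b) :=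
    (Matrix.mulVec_mulVec b U1 (1 - M ^ k)).symm
  have r2 : (U1 * M ^ k * U1ᵀ).mulVec w0 = U1.mulVec ((M ^ k).mulVec c) := by
    rw [hc, Matrix.mulVec_mulVec, Matrix.mulVec_mulVec, Matrix.mul_assoc]
  rw [r1, r2, ← Matrix.mulVec_add]
  congr 1
  rw [Matrix.sub_mulVec, Matrix.one_mulVec, Matrix.mulVec_sub]
  abel
end

section
/- Let A ∈ ℝ^{n×p} admit the compact singular value decomposition A = V₁Σ₁U₁ᵀ with U₁ᵀU₁ = V₁ᵀV₁ = I_r and Σ₁ = diag(σ₁,…,σ_r), σ_i > 0; set d_i = σ_i². Let w̄ ∈ ℝ^p and w₀ ∈ ℝ^p with w₀ = U₁U₁ᵀw₀, and set u = U₁ᵀ(w̄ − w₀) ∈ ℝ^r. Define the noiseless SAM trajectory by m₀ = w₀ and m_{k+1} = m_k − η·G₀(m_k + ρ·G₀(m_k)) where G₀(w) = AᵀA(w − w̄). Then for every k ≥ 0 and every n > 0, the squared bias satisfies (1/n)‖A(m_k − w̄)‖₂² = (1/n) Σ_{i=1}^r (1 − ηd_i − ηρd_i²)^{2k} d_i u_i².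 -/
open Matrix

/-- Squared bias of the noiseless SAM trajectory on the least-squares loss:
`(1/n)‖A(m_k − w̄)‖₂² = (1/n) Σ_i (1 − ηd_i − ηρd_i²)^{2k} d_i u_i²`
where `d_i = σ_i²` and `u = U₁ᵀ(w̄ − w₀)`. -/
theorem sam_squared_bias (n p r : ℕ) (hn : 0 < n)
    (A : Matrix (Fin n) (Fin p) ℝ)
    (U1 : Matrix (Fin p) (Fin r) ℝ) (V1 : Matrix (Fin n) (Fin r) ℝ)
    (s : Fin r → ℝ) (hs : ∀ i, 0 < s i)
    (hU : U1ᵀ * U1 = 1) (hV : V1ᵀ * V1 = 1)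
    (hA : A = V1 * Matrix.diagonal s * U1ᵀ)
    (d : Fin r → ℝ) (hd : ∀ i, d i = s i ^ 2)
    (wbar w0 : Fin p → ℝ)
    (hw0proj : w0 = (U1 * U1ᵀ).mulVec w0)
    (u : Fin r → ℝ) (hu : u = U1ᵀ.mulVec (wbar - w0))
    (η ρ : ℝ)
    (G0 : (Fin p → ℝ) → (Fin p → ℝ))
    (hG0 : ∀ w, G0 w = (Aᵀ * A).mulVec (w - wbar))
    (m : ℕ → Fin p → ℝ)
    (hm0 : m 0 = w0)
    (hm : ∀ k, m (k + 1) = m k - η • G0 (m k + ρ • G0 (m k))) :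
    ∀ k : ℕ,
      (1 / (n : ℝ)) * ∑ j, (A.mulVec (m k - wbar) j) ^ 2
        = (1 / (n : ℝ)) *
            ∑ i, (1 - η * d i - η * ρ * d i ^ 2) ^ (2 * k) * d i * u i ^ 2 := by
  set c : Fin r → ℝ := fun i => 1 - η * d i - η * ρ * d i ^ 2 with hc
  -- AᵀA = U1 D U1ᵀ
  have hAtA : Aᵀ * A = U1 * Matrix.diagonal d * U1ᵀ := by
    rw [hA]
    have hds : Matrix.diagonal s * Matrix.diagonal s = Matrix.diagonal d := by
      rw [Matrix.diagonal_mul_diagonal]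
      have : (fun i => s i * s i) = d := by funext i; rw [hd i]; ring
      rw [this]
    rw [Matrix.transpose_mul, Matrix.transpose_mul, Matrix.transpose_transpose,
      Matrix.diagonal_transpose]
    simp only [Matrix.mul_assoc]
    rw [← Matrix.mul_assoc V1ᵀ V1, hV, Matrix.one_mul,
      ← Matrix.mul_assoc (Matrix.diagonal s), hds]
  -- key: U1ᵀ (AᵀA z) = d • (U1ᵀ z)
  have key : ∀ z : Fin p → ℝ,
      U1ᵀ.mulVec ((Aᵀ * A).mulVec z) = fun i => d i * U1ᵀ.mulVec z i := by
    intro z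
    rw [Matrix.mulVec_mulVec, hAtA, ← Matrix.mul_assoc, ← Matrix.mul_assoc, hU,
      Matrix.one_mul, ← Matrix.mulVec_mulVec]
    funext i
    rw [Matrix.mulVec_diagonal]
  -- induction: U1ᵀ (m k - wbar) = c^k • (-u)
  have hv : ∀ k : ℕ, U1ᵀ.mulVec (m k - wbar) = fun i => c i ^ k * (-(u i)) := by
    intro k
    induction k with
    | zero =>
      funext i
      simp only [pow_zero, one_mul, hm0, hu]
      have : w0 - wbar = -(wbar - w0) := by ring_nf
      rw [this, Matrix.mulVec_neg]
      rfl
    | succ k ih =>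
      have hstep : m (k + 1) - wbar =
          (m k - wbar) - η • (Aᵀ * A).mulVec
            ((m k - wbar) + ρ • (Aᵀ * A).mulVec (m k - wbar)) := by
        rw [hm k, hG0, hG0]
        have h1 : m k + ρ • (Aᵀ * A).mulVec (m k - wbar) - wbar
            = (m k - wbar) + ρ • (Aᵀ * A).mulVec (m k - wbar) := by abel
        rw [h1]
        abel
      rw [hstep, Matrix.mulVec_sub, Matrix.mulVec_smul, key, Matrix.mulVec_add,
        Matrix.mulVec_smul, key, ih]
      funext i
      simp only [Pi.sub_apply, Pi.smul_apply, Pi.add_apply, smul_eq_mul, hc]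
      ring
  intro k
  congr 1
  -- A (m k - wbar) = V1 (Σ U1ᵀ (m k - wbar))
  have hAz : A.mulVec (m k - wbar) =
      V1.mulVec ((Matrix.diagonal s).mulVec (U1ᵀ.mulVec (m k - wbar))) := by
    rw [hA, Matrix.mulVec_mulVec, Matrix.mulVec_mulVec]
  set y : Fin r → ℝ := (Matrix.diagonal s).mulVec (U1ᵀ.mulVec (m k - wbar)) with hy
  have horth : ∑ j, (V1.mulVec y j) ^ 2 = ∑ i, y i ^ 2 := by
    have h1 : ∑ j, (V1.mulVec y j) ^ 2 = (V1.mulVec y) ⬝ᵥ (V1.mulVec y) := by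
      simp [dotProduct, sq]
    have h2 : (V1.mulVec y) ⬝ᵥ (V1.mulVec y) = y ⬝ᵥ y := by
      rw [Matrix.dotProduct_mulVec, ← Matrix.mulVec_transpose,
        Matrix.mulVec_mulVec, hV, Matrix.one_mulVec]
    rw [h1, h2]
    simp [dotProduct, sq]
  rw [hAz, horth]
  apply Finset.sum_congr rfl
  intro i _
  have hyi : y i = s i * (c i ^ k * (-(u i))) := by
    rw [hy, Matrix.mulVec_diagonal, hv k]
  rw [hyi]
  simp only [hc, hd]
  ring
end

section
/- In the setting of the compact SVD A = V₁Σ₁U₁ᵀ (U₁ᵀU₁ = V₁ᵀV₁ = I_r, Σ₁ = diag(σ₁,…,σ_r) with σ_i > 0, d_i = σ_i²), let w̄ ∈ ℝ^p, w₀ = U₁U₁ᵀw₀, and let ε : Ω → ℝ^n be a random vector on a probability space with E[ε] = 0 and E[ε_i ε_j] = σ²·δ_{ij} for a constant σ ≥ 0 (each product ε_i ε_j integrable). For each outcome, let w_k(ε) be the SAM iterates for G_ε(w) = AᵀA(w − w̄) − Aᵀε started at w₀, and let m_k = w_k(0) be the noiseless trajectory. Then for every k ≥ 0, E[(1/n)‖A(w_k(ε)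 − m_k)‖₂²] = (σ²/n) Σ_{i=1}^r (1 − (1 − ηd_i − ηρd_i²)^k)². -/
open Matrix MeasureTheory

/-! The SAM step for the least-squares gradient is affine in the iterate and in the noise, so the
prediction error `z_k = A (w_k(e) - w_k(0))` satisfies `e - z_{k+1} = (1 - T) (e - z_k)` with
`T = η (AAᵀ + ρ (AAᵀ)²)`, hence `z_k = (1 - (1 - T)^k) e`. Since `AAᵀ = V₁ diag(d) V₁ᵀ`, this is
`z_k = V₁ diag(c) V₁ᵀ e` with `c_i = 1 - (1 - η d_i - η ρ d_i²)^k`, and for noise with covariance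
`σ² I` one has `E[εᵀ B ε] = σ² tr B`, so `E ‖z_k‖² = σ² tr (V₁ diag(c²) V₁ᵀ) = σ² Σ c_i²`. -/

section ConjDiagonal

variable {R m n : Type*} [CommRing R] [Fintype n] [DecidableEq n] {V : Matrix m n R}

theorem conj_diagonal_mul_conj_diagonal [Fintype m] (hV : Vᵀ * V = 1) (a b : n → R) :
    V * diagonal a * Vᵀ * (V * diagonal b * Vᵀ) = V * diagonal (a * b) * Vᵀ := by
  calc V * diagonal a * Vᵀ * (V * diagonal b * Vᵀ)
      = V * diagonal a * (Vᵀ * V) * diagonal b * Vᵀ := by simp only [Matrix.mul_assoc]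
    _ = V * diagonal (a * b) * Vᵀ := by
      rw [hV, Matrix.mul_one, Matrix.mul_assoc V, diagonal_mul_diagonal]; rfl

theorem one_sub_conj_diagonal_pow [Fintype m] [DecidableEq m] (hV : Vᵀ * V = 1) (t : n → R)
    (k : ℕ) :
    (1 - V * diagonal t * Vᵀ) ^ k = 1 - V * diagonal (1 - (1 - t) ^ k) * Vᵀ := by
  induction k with
  | zero => simp
  | succ k ih =>
    have hcoef : diagonal (1 - (1 - t) ^ (k + 1))
        = diagonal (1 - (1 - t) ^ k) + diagonal t - diagonal ((1 - (1 - t) ^ k) * t) := by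
      rw [diagonal_add, diagonal_sub]; congr 1; funext i; simp only [Pi.sub_apply, Pi.one_apply,
        Pi.pow_apply, Pi.mul_apply]; ring
    rw [pow_succ, ih, Matrix.sub_mul, Matrix.one_mul, Matrix.mul_sub, Matrix.mul_one,
      conj_diagonal_mul_conj_diagonal hV, hcoef]
    simp only [Matrix.mul_sub, Matrix.sub_mul, Matrix.mul_add, Matrix.add_mul]
    abel

theorem trace_conj_diagonal [Fintype m] (hV : Vᵀ * V = 1) (a : n → R) :
    (V * diagonal a * Vᵀ).trace = ∑ i, a i := by
  rw [Matrix.mul_assoc, trace_mul_comm, Matrix.mul_assoc, hV, Matrix.mul_one, trace_diagonal]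

theorem transpose_conj_diagonal (a : n → R) : (V * diagonal a * Vᵀ)ᵀ = V * diagonal a * Vᵀ := by
  simp [Matrix.transpose_mul, Matrix.mul_assoc]

theorem mul_transpose_eq_conj_diagonal {p : Type*} [Fintype p] [Fintype m] {A : Matrix m p R}
    {U : Matrix p n R} {s : n → R} (hA : A = V * diagonal s * Uᵀ) (hU : Uᵀ * U = 1) :
    A * Aᵀ = V * diagonal (s * s) * Vᵀ := by
  rw [hA, Matrix.transpose_mul, Matrix.transpose_mul, transpose_transpose, diagonal_transpose]
  calc V * diagonal s * Uᵀ * (U * (diagonal s * Vᵀ))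
      = V * diagonal s * (Uᵀ * U) * diagonal s * Vᵀ := by simp only [Matrix.mul_assoc]
    _ = V * diagonal (s * s) * Vᵀ := by
      rw [hU, Matrix.mul_one, Matrix.mul_assoc V, diagonal_mul_diagonal]; rfl

end ConjDiagonal

theorem sum_sq_mulVec {R m n : Type*} [CommRing R] [Fintype m] [Fintype n] (C : Matrix m n R)
    (v : n → R) :
    ∑ j, (C *ᵥ v) j ^ 2 = v ⬝ᵥ ((Cᵀ * C) *ᵥ v) := by
  rw [← mulVec_mulVec, dotProduct_mulVec, vecMul_transpose]
  simp only [dotProduct, sq]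

theorem integral_dotProduct_mulVec_of_isotropic {Ω ι : Type*} [MeasurableSpace Ω] {P : Measure Ω}
    [Fintype ι] [DecidableEq ι] {ε : Ω → ι → ℝ} {σ : ℝ}
    (hint : ∀ i j, Integrable (fun ω => ε ω i * ε ω j) P)
    (hcov : ∀ i j, ∫ ω, ε ω i * ε ω j ∂P = if i = j then σ ^ 2 else 0) (B : Matrix ι ι ℝ) :
    ∫ ω, ε ω ⬝ᵥ (B *ᵥ ε ω) ∂P = σ ^ 2 * B.trace := by
  have hexpand : ∀ ω, ε ω ⬝ᵥ (B *ᵥ ε ω) = ∑ i, ∑ j, B i j * (ε ω i * ε ω j) := fun ω => by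
    simp only [dotProduct, mulVec, Finset.mul_sum]
    exact Finset.sum_congr rfl fun i _ => Finset.sum_congr rfl fun j _ => by ring
  calc ∫ ω, ε ω ⬝ᵥ (B *ᵥ ε ω) ∂P = ∑ i, ∑ j, B i j * ∫ ω, ε ω i * ε ω j ∂P := by
        simp only [hexpand]
        rw [integral_finsetSum (f := fun i ω => ∑ j, B i j * (ε ω i * ε ω j)) _
          fun i _ => integrable_finsetSum _ fun j _ => (hint i j).const_mul _]
        refine Finset.sum_congr rfl fun i _ => ?_
        rw [integral_finsetSum (f := fun j ω => B i j * (ε ω i * ε ω j)) _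
          fun j _ => (hint i j).const_mul _]
        exact Finset.sum_congr rfl fun j _ => integral_const_mul _ _
    _ = σ ^ 2 * B.trace := by simp [hcov, trace, Finset.mul_sum, mul_comm]

theorem integral_sum_sq_conj_diagonal_mulVec_of_isotropic {Ω ι κ : Type*} [MeasurableSpace Ω]
    {P : Measure Ω} [Fintype ι] [DecidableEq ι] [Fintype κ] [DecidableEq κ] {ε : Ω → ι → ℝ}
    {σ : ℝ} (hint : ∀ i j, Integrable (fun ω => ε ω i * ε ω j) P)
    (hcov : ∀ i j, ∫ ω, ε ω i * ε ω j ∂P = if i = j then σ ^ 2 else 0) {V : Matrix ι κ ℝ}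
    (hV : Vᵀ * V = 1) (c : κ → ℝ) :
    ∫ ω, ∑ j, ((V * diagonal c * Vᵀ) *ᵥ ε ω) j ^ 2 ∂P = σ ^ 2 * ∑ i, c i ^ 2 := by
  simp only [sum_sq_mulVec, transpose_conj_diagonal, conj_diagonal_mul_conj_diagonal hV]
  rw [integral_dotProduct_mulVec_of_isotropic hint hcov, trace_conj_diagonal hV]
  exact congrArg _ (Finset.sum_congr rfl fun i _ => (sq (c i)).symm)

section SAM

def samStep {R E : Type*} [Semiring R] [AddCommGroup E] [Module R E] (η ρ : R) (g : E → E)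
    (w : E) : E :=
  w - η • g (w + ρ • g w)

variable {R m p : Type*} [CommRing R] [Fintype m] [Fintype p]

def lsqGrad (A : Matrix m p R) (wbar : p → R) (e : m → R) (w : p → R) : p → R :=
  (Aᵀ * A) *ᵥ (w - wbar) - Aᵀ *ᵥ e

variable [DecidableEq m]

theorem sub_mulVec_samStep_sub (A : Matrix m p R) (wbar : p → R) (η ρ : R) (e : m → R)
    (x y : p → R) :
    e - A *ᵥ (samStep η ρ (lsqGrad A wbar e) x - samStep η ρ (lsqGrad A wbar 0) y)
      = (1 - η • (A * Aᵀ + ρ • (A * Aᵀ) ^ 2)) *ᵥ (e - A *ᵥ (x - y)) := by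
  simp only [samStep, lsqGrad, sq, mulVec_sub, mulVec_add, mulVec_smul, sub_mulVec, add_mulVec,
    smul_mulVec, one_mulVec, mulVec_mulVec, mulVec_zero, Matrix.sub_mul, Matrix.add_mul,
    Matrix.smul_mul, Matrix.one_mul, Matrix.mul_assoc, sub_zero]
  module

theorem sub_mulVec_iterate_samStep_sub (A : Matrix m p R) (wbar : p → R) (η ρ : R) (e : m → R)
    (w0 : p → R) (k : ℕ) :
    e - A *ᵥ ((samStep η ρ (lsqGrad A wbar e))^[k] w0 - (samStep η ρ (lsqGrad A wbar 0))^[k] w0)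
      = (1 - η • (A * Aᵀ + ρ • (A * Aᵀ) ^ 2)) ^ k *ᵥ e := by
  induction k with
  | zero => simp
  | succ k ih =>
    rw [Function.iterate_succ_apply', Function.iterate_succ_apply', sub_mulVec_samStep_sub, ih,
      pow_succ' _ k, mulVec_mulVec]

theorem mulVec_iterate_samStep_sub_eq_conj_diagonal {r : Type*} [Fintype r] [DecidableEq r]
    {A : Matrix m p R} {V : Matrix m r R} {d : r → R} (hV : Vᵀ * V = 1)
    (hAAt : A * Aᵀ = V * diagonal d * Vᵀ) (wbar : p → R) (η ρ : R) (e : m → R) (w0 : p → R)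
    (k : ℕ) :
    A *ᵥ ((samStep η ρ (lsqGrad A wbar e))^[k] w0 - (samStep η ρ (lsqGrad A wbar 0))^[k] w0)
      = (V * diagonal (fun i => 1 - (1 - η * d i - η * ρ * d i ^ 2) ^ k) * Vᵀ) *ᵥ e := by
  have hT : η • (A * Aᵀ + ρ • (A * Aᵀ) ^ 2)
      = V * diagonal (fun i => η * d i + η * ρ * d i ^ 2) * Vᵀ := by
    have ht : diagonal (fun i => η * d i + η * ρ * d i ^ 2)
        = η • (diagonal d + ρ • diagonal (d * d)) := by
      ext i j
      by_cases hij : i = j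
      · subst hij
        simp only [diagonal_apply_eq, Matrix.smul_apply, Matrix.add_apply, Pi.mul_apply,
          smul_eq_mul]
        ring
      · simp [hij]
    rw [hAAt, sq, conj_diagonal_mul_conj_diagonal hV, ht]
    simp only [Matrix.mul_smul, Matrix.smul_mul, Matrix.mul_add, Matrix.add_mul]
  have h := sub_mulVec_iterate_samStep_sub A wbar η ρ e w0 k
  rw [hT, one_sub_conj_diagonal_pow hV, sub_mulVec, one_mulVec, sub_right_inj] at h
  have hc : 1 - (1 - fun i => η * d i + η * ρ * d i ^ 2) ^ k
      = fun i => 1 - (1 - η * d i - η * ρ * d i ^ 2) ^ k := by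
    funext i
    simp only [Pi.sub_apply, Pi.one_apply, Pi.pow_apply, sub_add_eq_sub_sub]
  rw [h, hc]

end SAM

theorem sam_variance_general (n p r : ℕ)
    (A : Matrix (Fin n) (Fin p) ℝ)
    (U1 : Matrix (Fin p) (Fin r) ℝ) (V1 : Matrix (Fin n) (Fin r) ℝ)
    (s : Fin r → ℝ)
    (hU : U1ᵀ * U1 = 1) (hV : V1ᵀ * V1 = 1)
    (hA : A = V1 * Matrix.diagonal s * U1ᵀ)
    (d : Fin r → ℝ) (hd : ∀ i, d i = s i ^ 2)
    (wbar w0 : Fin p → ℝ)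
    (η ρ : ℝ)
    {Ω : Type*} [MeasurableSpace Ω] (P : Measure Ω)
    (ε : Ω → Fin n → ℝ)
    (σ : ℝ)
    (hεprodint : ∀ i j, Integrable (fun ω => ε ω i * ε ω j) P)
    (hεcov : ∀ i j, ∫ ω, ε ω i * ε ω j ∂P = if i = j then σ ^ 2 else 0)
    (G : (Fin n → ℝ) → (Fin p → ℝ) → (Fin p → ℝ))
    (hG : ∀ e w, G e w = (Aᵀ * A).mulVec (w - wbar) - Aᵀ.mulVec e)
    (w : ℕ → (Fin n → ℝ) → Fin p → ℝ)
    (hw0 : ∀ e, w 0 e = w0)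
    (hw : ∀ k e, w (k + 1) e = w k e - η • G e (w k e + ρ • G e (w k e)))
    (m : ℕ → Fin p → ℝ) (hm : ∀ k, m k = w k 0) :
    ∀ k : ℕ,
      ∫ ω, (1 / (n : ℝ)) * ∑ j, (A.mulVec (w k (ε ω) - m k) j) ^ 2 ∂P
        = (σ ^ 2 / (n : ℝ)) *
            ∑ i, (1 - (1 - η * d i - η * ρ * d i ^ 2) ^ k) ^ 2 := by
  intro k
  obtain rfl : G = lsqGrad A wbar := funext₂ hG
  have hiter : ∀ e, w k e = (samStep η ρ (lsqGrad A wbar e))^[k] w0 := by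
    intro e
    induction k with
    | zero => exact hw0 e
    | succ k ih => rw [hw, ih, Function.iterate_succ_apply']; rfl
  have hAAt : A * Aᵀ = V1 * diagonal d * V1ᵀ := by
    rw [mul_transpose_eq_conj_diagonal hA hU]; congr; funext i; simp [hd, sq]
  simp only [hm, hiter, mulVec_iterate_samStep_sub_eq_conj_diagonal hV hAAt, integral_const_mul,
    integral_sum_sq_conj_diagonal_mulVec_of_isotropic hεprodint hεcov hV]
  ring

/-- Variance of the SAM iterates on the least-squares loss with zero-mean noise of
covariance `σ²·I`: `E[(1/n)‖A(w_k(ε) − m_k)‖₂²] = (σ²/n) Σ_i (1 − (1 − ηd_i − ηρd_i²)^k)²`,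
where `m_k` is the noiseless trajectory and `d_i = σ_i²`. -/
theorem sam_variance (n p r : ℕ)
    (A : Matrix (Fin n) (Fin p) ℝ)
    (U1 : Matrix (Fin p) (Fin r) ℝ) (V1 : Matrix (Fin n) (Fin r) ℝ)
    (s : Fin r → ℝ) (hs : ∀ i, 0 < s i)
    (hU : U1ᵀ * U1 = 1) (hV : V1ᵀ * V1 = 1)
    (hA : A = V1 * Matrix.diagonal s * U1ᵀ)
    (d : Fin r → ℝ) (hd : ∀ i, d i = s i ^ 2)
    (wbar w0 : Fin p → ℝ)
    (hw0proj : w0 = (U1 * U1ᵀ).mulVec w0)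
    (η ρ : ℝ)
    {Ω : Type*} [MeasurableSpace Ω] (P : Measure Ω) [IsProbabilityMeasure P]
    (ε : Ω → Fin n → ℝ) (hεmeas : Measurable ε)
    (σ : ℝ) (hσ : 0 ≤ σ)
    (hεint : ∀ i, Integrable (fun ω => ε ω i) P)
    (hεmean : ∀ i, ∫ ω, ε ω i ∂P = 0)
    (hεprodint : ∀ i j, Integrable (fun ω => ε ω i * ε ω j) P)
    (hεcov : ∀ i j, ∫ ω, ε ω i * ε ω j ∂P = if i = j then σ ^ 2 else 0)
    (G : (Fin n → ℝ) → (Fin p → ℝ) → (Fin p → ℝ))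
    (hG : ∀ e w, G e w = (Aᵀ * A).mulVec (w - wbar) - Aᵀ.mulVec e)
    (w : ℕ → (Fin n → ℝ) → Fin p → ℝ)
    (hw0 : ∀ e, w 0 e = w0)
    (hw : ∀ k e, w (k + 1) e = w k e - η • G e (w k e + ρ • G e (w k e)))
    (m : ℕ → Fin p → ℝ) (hm : ∀ k, m k = w k 0) :
    ∀ k : ℕ,
      ∫ ω, (1 / (n : ℝ)) * ∑ j, (A.mulVec (w k (ε ω) - m k) j) ^ 2 ∂P
        = (σ ^ 2 / (n : ℝ)) *
            ∑ i, (1 - (1 - η * d i - η * ρ * d i ^ 2) ^ k) ^ 2 :=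
  sam_variance_general n p r A U1 V1 s hU hV hA d hd wbar w0 η ρ P ε σ hεprodint hεcov G hG w hw0 hw
    m hm
end

section
/- Let r ≥ 1, let d₁,…,d_r > 0, and let η ≥ 0, ρ ≥ 0 satisfy 1 − ηd_i − ηρd_i² ≥ 0 for every i. Then for every k ≥ 0: Σ_{i=1}^r (1 − (1 − ηd_i − ηρd_i²)^k)² ≥ Σ_{i=1}^r (1 − (1 − ηd_i)^k)². In words, the variance of SAM at every iteration is at least the variance of gradient descent. -/
/-- The variance of SAM at every iteration is at least that of gradient descent. -/
theorem sam_var_ge_gd_var (r : ℕ) (hr : 1 ≤ r)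
    (d : Fin r → ℝ) (hd : ∀ i, 0 < d i)
    (η ρ : ℝ) (hη : 0 ≤ η) (hρ : 0 ≤ ρ)
    (hcontr : ∀ i, 0 ≤ 1 - η * d i - η * ρ * d i ^ 2) :
    ∀ k : ℕ,
      ∑ i, (1 - (1 - η * d i) ^ k) ^ 2
        ≤ ∑ i, (1 - (1 - η * d i - η * ρ * d i ^ 2) ^ k) ^ 2 := by
  intro k
  apply Finset.sum_le_sum
  intro i _
  have h0 : 0 ≤ 1 - η * d i - η * ρ * d i ^ 2 := hcontr i
  have h1 : 1 - η * d i - η * ρ * d i ^ 2 ≤ 1 - η * d i := by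
    nlinarith [mul_nonneg (mul_nonneg hη hρ) (sq_nonneg (d i))]
  have h2 : 1 - η * d i ≤ 1 := by nlinarith [(hd i).le]
  have hs0 : (0:ℝ) ≤ (1 - η * d i - η * ρ * d i ^ 2) ^ k := pow_nonneg h0 k
  have hs1 : (1 - η * d i - η * ρ * d i ^ 2) ^ k ≤ (1 - η * d i) ^ k :=
    pow_le_pow_left₀ h0 h1 k
  have hs2 : (1 - η * d i) ^ k ≤ 1 :=
    pow_le_one₀ (le_trans h0 h1) h2
  nlinarith
end

section
/- Let r ≥ 1 and n ≥ 1, let d₁ ≥ d₂ ≥ … ≥ d_r > 0, u ∈ ℝ^r, σ > 0, and let η > 0, ρ ≥ 0 satisfy 0 < 1 − ηd_i − ηρd_i² < 1 for all i. For s ≥ 0 define Error_s(k) = (1/n)·Σ_{i=1}^r (1 − ηd_i − η·s·d_i²)^{2k} d_i u_i² + (σ²/n)·Σ_{i=1}^r (1 − (1 − ηd_i − η·s·d_i²)^k)². Suppose there exists a constant c₀ > 1 with 1 − ηd_r ≤ c₀·(1 − ηd₁ − ηρd₁²) and 1 − ηd₁ ≥ √c₀·(1 − ηd_r − ηρd_r²).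 Let SNR = (Σ_{i=1}^r d_i u_i²)/(r σ²) and assume SNR ≥ 1. Then for every natural number k with k ≤ log(2/(SNR + 1)) / log((1 − ηd₁ − ηρd₁²)² / (1 − ηd_r − ηρd_r²)), one has Error_ρ(k) ≤ Error₀(k). -/
/-!
Write `b_i` and `a_i` for the SAM and gradient-descent contraction factors along the `i`-th
singular direction, so `0 < b_i ≤ a_i ≤ 1`. Passing from `a_i` to `b_i` lowers the
bias term `a_i^{2k} d_i u_i²` by at least `((a_1^k)² - (b_r^k)²) d_i u_i²` and raises the
variance term `σ² (1 - a_i^k)²` by at most `σ² (a_r^k - b_1^k)(2 - a_1^k - b_1^k)`. The two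
spectral-gap conditions and the bound on `k`, which gives `2 ≤ (SNR + 1) b_r^k`, make the total bias
gain `SNR · r σ² ((a_1^k)² - (b_r^k)²)` dominate the total variance loss.
-/

open Finset

/-- Contraction factor of one SAM step (step `η`, radius `ρ`) along a direction with squared
singular value `x`; `ρ = 0` gives gradient descent. -/
def samFactor (η ρ x : ℝ) : ℝ := 1 - η * x - η * ρ * x ^ 2

/-- `x i` is the fraction of the `i`-th spectral component left after `k` steps and
`w i = d_i u_i²`; the prediction error is this quantity divided by `n`. -/
def biasVarianceError {ι : Type*} [Fintype ι] (σ : ℝ) (w x : ι → ℝ) : ℝ :=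
  ∑ i, x i ^ 2 * w i + σ ^ 2 * ∑ i, (1 - x i) ^ 2

section samFactor

variable {η ρ x y : ℝ}

theorem samFactor_le_samFactor_of_le (hη : 0 ≤ η) (hρ : 0 ≤ ρ) (hx : 0 ≤ x) (hxy : x ≤ y) :
    samFactor η ρ y ≤ samFactor η ρ x := by
  unfold samFactor
  have : η * ρ * x ^ 2 ≤ η * ρ * y ^ 2 := by gcongr
  nlinarith [mul_le_mul_of_nonneg_left hxy hη]

theorem samFactor_le_samFactor_zero (hη : 0 ≤ η) (hρ : 0 ≤ ρ) (x : ℝ) :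
    samFactor η ρ x ≤ samFactor η 0 x := by
  unfold samFactor
  nlinarith [mul_nonneg (mul_nonneg hη hρ) (sq_nonneg x)]

theorem samFactor_le_one (hη : 0 ≤ η) (hρ : 0 ≤ ρ) (hx : 0 ≤ x) : samFactor η ρ x ≤ 1 := by
  unfold samFactor
  nlinarith [mul_nonneg hη hx, mul_nonneg (mul_nonneg hη hρ) (sq_nonneg x)]

end samFactor

theorem variance_increase_le_bias_decrease {X Y P Q C S : ℝ} (hX : 0 ≤ X) (hXY : X ≤ Y)
    (hY : Y ≤ 1) (hXP : X ≤ P) (hP : P ≤ 1) (hQ : Q ≤ C * X) (hCY : C * Y ^ 2 ≤ P ^ 2)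
    (hC : 1 ≤ C) (hS : 0 ≤ S) (hSY : 2 ≤ (S + 1) * Y) :
    (Q - X) * (2 - P - X) ≤ S * (P ^ 2 - Y ^ 2) :=
  calc (Q - X) * (2 - P - X) ≤ (C - 1) * (X * (2 - 2 * X)) := by
        nlinarith [mul_le_mul_of_nonneg_right hQ (by linarith : (0 : ℝ) ≤ 2 - P - X),
          mul_le_mul_of_nonneg_left hXP (mul_nonneg (sub_nonneg.2 hC) hX)]
    _ ≤ (C - 1) * (Y * (2 - Y)) :=
        mul_le_mul_of_nonneg_left (by nlinarith) (by linarith)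
    _ ≤ (C - 1) * (S * Y ^ 2) :=
        mul_le_mul_of_nonneg_left (by nlinarith) (by linarith)
    _ ≤ S * (P ^ 2 - Y ^ 2) := by nlinarith [mul_le_mul_of_nonneg_left hCY hS]

theorem le_pow_of_natCast_le_log_div_log {c q : ℝ} {k : ℕ} (hc : 0 < c) (hq₀ : 0 < q)
    (hq₁ : q < 1) (hk : (k : ℝ) ≤ Real.log c / Real.log q) : c ≤ q ^ k := by
  rw [← Real.log_le_log_iff hc (pow_pos hq₀ k), Real.log_pow]
  exact (le_div_iff_of_neg (Real.log_neg hq₀ hq₁)).mp hk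

theorem two_le_mul_pow_of_le_log_div_log {S b₁ bᵣ : ℝ} {k : ℕ} (hS : 0 ≤ S) (hb₁ : 0 < b₁)
    (hb : b₁ ≤ bᵣ) (hbᵣ : bᵣ < 1)
    (hk : (k : ℝ) ≤ Real.log (2 / (S + 1)) / Real.log (b₁ ^ 2 / bᵣ)) :
    2 ≤ (S + 1) * bᵣ ^ k := by
  have hbᵣ₀ : 0 < bᵣ := hb₁.trans_le hb
  have hq : b₁ ^ 2 / bᵣ ≤ bᵣ := by
    rw [div_le_iff₀ hbᵣ₀]
    nlinarith
  have h := (le_pow_of_natCast_le_log_div_log (by positivity) (by positivity)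
    (hq.trans_lt hbᵣ) hk).trans (pow_le_pow_left₀ (by positivity) hq k)
  rwa [div_le_iff₀ (by linarith), mul_comm] at h

theorem mul_sq_le_sq_of_sqrt_mul_le {a b c : ℝ} (hc : 0 ≤ c) (hb : 0 ≤ b)
    (h : Real.sqrt c * b ≤ a) : c * b ^ 2 ≤ a ^ 2 := by
  simpa [mul_pow, Real.sq_sqrt hc] using pow_le_pow_left₀ (by positivity) h 2

section biasVarianceError

variable {ι : Type*} [Fintype ι] {σ S : ℝ} {w : ι → ℝ}

theorem biasVarianceError_le {X Y P Q : ℝ} {x y : ι → ℝ} (hw : ∀ i, 0 ≤ w i)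
    (hsum : ∑ i, w i = S * (Fintype.card ι * σ ^ 2)) (hX : 0 ≤ X) (hP : 0 ≤ P) (hQ : Q ≤ 1)
    (hy : ∀ i, X ≤ y i ∧ y i ≤ Y ∧ y i ≤ x i) (hx : ∀ i, P ≤ x i ∧ x i ≤ Q)
    (hgap : (Q - X) * (2 - P - X) ≤ S * (P ^ 2 - Y ^ 2)) :
    biasVarianceError σ w y ≤ biasVarianceError σ w x := by
  have hbias : ∀ i, y i ^ 2 * w i ≤ x i ^ 2 * w i + (Y ^ 2 - P ^ 2) * w i := fun i => by
    obtain ⟨hXy, hyY, -⟩ := hy i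
    have hYy : y i ^ 2 ≤ Y ^ 2 := pow_le_pow_left₀ (hX.trans hXy) hyY 2
    have hPx : P ^ 2 ≤ x i ^ 2 := pow_le_pow_left₀ hP (hx i).1 2
    nlinarith [mul_le_mul_of_nonneg_right (by linarith : y i ^ 2 ≤ x i ^ 2 + (Y ^ 2 - P ^ 2))
      (hw i)]
  have hvar : ∀ i, (1 - y i) ^ 2 ≤ (1 - x i) ^ 2 + (Q - X) * (2 - P - X) := fun i => by
    obtain ⟨hXy, -, hyx⟩ := hy i
    obtain ⟨hPx, hxQ⟩ := hx i
    have : (x i - y i) * (2 - x i - y i) ≤ (Q - X) * (2 - P - X) :=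
      mul_le_mul (by linarith) (by linarith) (by linarith) (by linarith)
    linarith [show (1 - y i) ^ 2 = (1 - x i) ^ 2 + (x i - y i) * (2 - x i - y i) by ring]
  calc biasVarianceError σ w y
      ≤ ∑ i, (x i ^ 2 * w i + (Y ^ 2 - P ^ 2) * w i)
          + σ ^ 2 * ∑ i, ((1 - x i) ^ 2 + (Q - X) * (2 - P - X)) := by
        unfold biasVarianceError
        gcongr with i
        exacts [hbias i, hvar i]
    _ = biasVarianceError σ w x
          + Fintype.card ι * σ ^ 2 * ((Q - X) * (2 - P - X) - S * (P ^ 2 - Y ^ 2)) := by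
        simp only [biasVarianceError, sum_add_distrib, ← mul_sum, hsum, sum_const, card_univ,
          nsmul_eq_mul]
        ring
    _ ≤ biasVarianceError σ w x :=
        add_le_of_nonpos_right (mul_nonpos_of_nonneg_of_nonpos (by positivity)
          (sub_nonpos.2 hgap))

theorem biasVarianceError_pow_le {a b : ι → ℝ} (i₁ iᵣ : ι) {c : ℝ} (k : ℕ)
    (hb : ∀ i, b i₁ ≤ b i ∧ b i ≤ b iᵣ ∧ b i ≤ a i) (ha : ∀ i, a i₁ ≤ a i ∧ a i ≤ a iᵣ)
    (hb₁ : 0 ≤ b i₁) (haᵣ : a iᵣ ≤ 1) (hc : 1 ≤ c) (hcb₁ : a iᵣ ≤ c * b i₁)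
    (hcbᵣ : c * b iᵣ ^ 2 ≤ a i₁ ^ 2) (hw : ∀ i, 0 ≤ w i) (hS : 0 ≤ S)
    (hsum : ∑ i, w i = S * (Fintype.card ι * σ ^ 2)) (hk : 2 ≤ (S + 1) * b iᵣ ^ k) :
    biasVarianceError σ w (fun i => b i ^ k) ≤ biasVarianceError σ w (fun i => a i ^ k) := by
  have hb₀ : ∀ i, 0 ≤ b i := fun i => hb₁.trans (hb i).1
  have ha₀ : ∀ i, 0 ≤ a i := fun i => (hb₀ i).trans (hb i).2.2
  have ha₁ : a i₁ ≤ 1 := (ha i₁).2.trans haᵣ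
  refine biasVarianceError_le (Y := b iᵣ ^ k) (Q := a iᵣ ^ k) hw hsum (pow_nonneg hb₁ k)
    (pow_nonneg (ha₀ i₁) k) (pow_le_one₀ (ha₀ iᵣ) haᵣ) (fun i => ?_) (fun i => ?_) ?_
  · exact ⟨pow_le_pow_left₀ hb₁ (hb i).1 k, pow_le_pow_left₀ (hb₀ i) (hb i).2.1 k,
      pow_le_pow_left₀ (hb₀ i) (hb i).2.2 k⟩
  · exact ⟨pow_le_pow_left₀ (ha₀ i₁) (ha i).1 k, pow_le_pow_left₀ (ha₀ i) (ha i).2 k⟩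
  refine variance_increase_le_bias_decrease (C := c ^ k) (pow_nonneg hb₁ k)
    (pow_le_pow_left₀ hb₁ (hb iᵣ).1 k) (pow_le_one₀ (hb₀ iᵣ) ((hb iᵣ).2.2.trans haᵣ))
    (pow_le_pow_left₀ hb₁ (hb i₁).2.2 k) (pow_le_one₀ (ha₀ i₁) ha₁) ?_ ?_ (one_le_pow₀ hc) hS hk
  · rw [← mul_pow]
    exact pow_le_pow_left₀ (ha₀ iᵣ) hcb₁ k
  · simpa only [mul_pow, pow_right_comm _ 2 k] using pow_le_pow_left₀ (by positivity) hcbᵣ k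

end biasVarianceError

theorem sam_error_le_gd_error_relu_general (r n : ℕ) (hr : 0 < r)
    (d u : Fin r → ℝ)
    (hmono : ∀ i j : Fin r, i ≤ j → d j ≤ d i)
    (hpos : ∀ i, 0 < d i)
    (σ : ℝ) (hσ : 0 < σ)
    (η ρ : ℝ) (hη : 0 < η) (hρ : 0 ≤ ρ)
    (hcontr : ∀ i, 0 < 1 - η * d i - η * ρ * d i ^ 2 ∧
        1 - η * d i - η * ρ * d i ^ 2 < 1)
    (Err : ℝ → ℕ → ℝ)
    (hErr : ∀ s k, Err s k
        = (1 / (n : ℝ)) *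
            (∑ i, (1 - η * d i - η * s * d i ^ 2) ^ (2 * k) * d i * u i ^ 2)
          + (σ ^ 2 / (n : ℝ)) *
            (∑ i, (1 - (1 - η * d i - η * s * d i ^ 2) ^ k) ^ 2))
    (d1 dr : ℝ)
    (hd1 : d1 = d ⟨0, hr⟩)
    (hdr : dr = d ⟨r - 1, Nat.sub_lt hr Nat.one_pos⟩)
    (c0 : ℝ) (hc0 : 1 < c0)
    (hcond1 : 1 - η * dr ≤ c0 * (1 - η * d1 - η * ρ * d1 ^ 2))
    (hcond2 : Real.sqrt c0 * (1 - η * dr - η * ρ * dr ^ 2) ≤ 1 - η * d1)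
    (SNR : ℝ) (hSNR : SNR = (∑ i, d i * u i ^ 2) / (r * σ ^ 2)) :
    ∀ k : ℕ,
      (k : ℝ) ≤ Real.log (2 / (SNR + 1)) /
          Real.log ((1 - η * d1 - η * ρ * d1 ^ 2) ^ 2 /
            (1 - η * dr - η * ρ * dr ^ 2)) →
        Err ρ k ≤ Err 0 k := by
  intro k hk
  subst hd1 hdr
  set i₁ : Fin r := ⟨0, hr⟩
  set iᵣ : Fin r := ⟨r - 1, Nat.sub_lt hr Nat.one_pos⟩
  have hd : ∀ i, d iᵣ ≤ d i ∧ d i ≤ d i₁ := fun i =>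
    ⟨hmono i iᵣ (Nat.le_sub_one_of_lt i.isLt), hmono i₁ i (Nat.zero_le _)⟩
  have hanti : ∀ s, 0 ≤ s → ∀ i j, d i ≤ d j → samFactor η s (d j) ≤ samFactor η s (d i) :=
    fun s hs i _ => samFactor_le_samFactor_of_le hη.le hs (hpos i).le
  have hSNR₀ : 0 ≤ SNR := hSNR ▸ div_nonneg (sum_nonneg fun i _ => by
    have := hpos i; positivity) (by positivity)
  have hsum : ∑ i, d i * u i ^ 2 = SNR * (Fintype.card (Fin r) * σ ^ 2) := by
    rw [hSNR, Fintype.card_fin, div_mul_cancel₀]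
    have : (0 : ℝ) < r := Nat.cast_pos.2 hr
    positivity
  have hErr' : ∀ s, Err s k = 1 / n * biasVarianceError σ (fun i => d i * u i ^ 2)
      (fun i => samFactor η s (d i) ^ k) := fun s => by
    simp only [hErr, biasVarianceError, samFactor, pow_mul', mul_assoc]
    ring
  rw [hErr', hErr']
  refine mul_le_mul_of_nonneg_left (biasVarianceError_pow_le i₁ iᵣ k
    (fun i => ⟨hanti ρ hρ _ _ (hd i).2, hanti ρ hρ _ _ (hd i).1,
      samFactor_le_samFactor_zero hη.le hρ _⟩)
    (fun i => ⟨hanti 0 le_rfl _ _ (hd i).2, hanti 0 le_rfl _ _ (hd i).1⟩)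
    (hcontr i₁).1.le (samFactor_le_one hη.le le_rfl (hpos iᵣ).le) hc0.le
    (by simpa [samFactor] using hcond1)
    (mul_sq_le_sq_of_sqrt_mul_le (by linarith) (hcontr iᵣ).1.le
      (by simpa [samFactor] using hcond2))
    (fun i => by have := hpos i; positivity) hSNR₀ hsum
    (two_le_mul_pow_of_le_log_div_log hSNR₀ (hcontr i₁).1 (hanti ρ hρ _ _ (hd i₁).1)
      (hcontr iᵣ).2 hk)) (by positivity)

/-- Under a spectral gap condition and a bound on the number of iterations depending on
the signal-to-noise ratio, the prediction error of SAM is at most that of gradient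
descent (ReLU network / linear regression model). -/
theorem sam_error_le_gd_error_relu (r n : ℕ) (hr : 0 < r) (hn : 0 < n)
    (d u : Fin r → ℝ)
    (hmono : ∀ i j : Fin r, i ≤ j → d j ≤ d i)
    (hpos : ∀ i, 0 < d i)
    (σ : ℝ) (hσ : 0 < σ)
    (η ρ : ℝ) (hη : 0 < η) (hρ : 0 ≤ ρ)
    (hcontr : ∀ i, 0 < 1 - η * d i - η * ρ * d i ^ 2 ∧
        1 - η * d i - η * ρ * d i ^ 2 < 1)
    (Err : ℝ → ℕ → ℝ)
    (hErr : ∀ s k, Err s k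
        = (1 / (n : ℝ)) *
            (∑ i, (1 - η * d i - η * s * d i ^ 2) ^ (2 * k) * d i * u i ^ 2)
          + (σ ^ 2 / (n : ℝ)) *
            (∑ i, (1 - (1 - η * d i - η * s * d i ^ 2) ^ k) ^ 2))
    (d1 dr : ℝ)
    (hd1 : d1 = d ⟨0, hr⟩)
    (hdr : dr = d ⟨r - 1, Nat.sub_lt hr Nat.one_pos⟩)
    (c0 : ℝ) (hc0 : 1 < c0)
    (hcond1 : 1 - η * dr ≤ c0 * (1 - η * d1 - η * ρ * d1 ^ 2))
    (hcond2 : Real.sqrt c0 * (1 - η * dr - η * ρ * dr ^ 2) ≤ 1 - η * d1)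
    (SNR : ℝ) (hSNR : SNR = (∑ i, d i * u i ^ 2) / (r * σ ^ 2))
    (hSNR1 : 1 ≤ SNR) :
    ∀ k : ℕ,
      (k : ℝ) ≤ Real.log (2 / (SNR + 1)) /
          Real.log ((1 - η * d1 - η * ρ * d1 ^ 2) ^ 2 /
            (1 - η * dr - η * ρ * dr ^ 2)) →
        Err ρ k ≤ Err 0 k :=
  sam_error_le_gd_error_relu_general r n hr d u hmono hpos σ hσ η ρ hη hρ hcontr Err hErr d1 dr hd1
    hdr c0 hc0 hcond1 hcond2 SNR hSNR
end

section
/- Let K = U·D·Uᵀ be a symmetric real n×n matrix, where U is orthogonal (UᵀU = I) and D = diag(d₁,…,d_n) is real diagonal (the d_i may be negative). Let w̄ ∈ ℝ^n and set u = Uᵀw̄. Let η, ρ ∈ ℝ and define the noiseless KernelSAM trajectory by m₀ = 0 and m_{k+1} = (I − ηK − ηρK²)m_k + η(I + ρK)K w̄. Then for every k ≥ 0, (1/n)‖K(m_k − w̄)‖₂² = (1/n)·Σ_{i=1}^n (1 − ηd_i − ηρd_i²)^{2k} d_i² u_i². -/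
open Matrix

/-- Squared bias of the noiseless KernelSAM trajectory for a symmetric (possibly
indefinite) Gram matrix `K = U D Uᵀ`:
`(1/n)‖K(m_k − w̄)‖₂² = (1/n) Σ_i (1 − ηd_i − ηρd_i²)^{2k} d_i² u_i²`. -/
theorem kernelSAM_squared_bias (n : ℕ) (hn : 0 < n)
    (K U D : Matrix (Fin n) (Fin n) ℝ) (d : Fin n → ℝ)
    (hU : Uᵀ * U = 1) (hD : D = Matrix.diagonal d) (hK : K = U * D * Uᵀ)
    (wbar : Fin n → ℝ)
    (u : Fin n → ℝ) (hu : u = Uᵀ.mulVec wbar)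
    (η ρ : ℝ)
    (m : ℕ → Fin n → ℝ)
    (hm0 : m 0 = 0)
    (hm : ∀ k, m (k + 1)
        = (1 - η • K - (η * ρ) • K ^ 2).mulVec (m k)
          + η • ((1 + ρ • K).mulVec (K.mulVec wbar))) :
    ∀ k : ℕ,
      (1 / (n : ℝ)) * ∑ j, (K.mulVec (m k - wbar) j) ^ 2
        = (1 / (n : ℝ)) *
            ∑ i, (1 - η * d i - η * ρ * d i ^ 2) ^ (2 * k) * d i ^ 2 * u i ^ 2 := by
  have hUU : U * Uᵀ = 1 := by rwa [mul_eq_one_comm] at hU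
  set c : Fin n → ℝ := fun i => 1 - η * d i - η * ρ * d i ^ 2 with hc
  have hKU : K * U = U * D := by
    rw [hK, Matrix.mul_assoc, Matrix.mul_assoc, hU, Matrix.mul_one]
  have hK2U : K ^ 2 * U = U * D ^ 2 := by
    rw [pow_two, pow_two, Matrix.mul_assoc, hKU, ← Matrix.mul_assoc, hKU, Matrix.mul_assoc]
  have hdiag : (1 : Matrix (Fin n) (Fin n) ℝ) - η • D - (η * ρ) • D ^ 2
      = Matrix.diagonal c := by
    ext i j
    by_cases h : i = j
    · subst h
      simp [hD, hc, pow_two, Matrix.mul_apply, Matrix.diagonal_apply, Matrix.one_apply]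
      try ring
    · simp [hD, pow_two, Matrix.mul_apply, Matrix.diagonal_apply, Matrix.one_apply, h]
  have key : ∀ k, m k - wbar = U.mulVec (fun i => -(c i ^ k * u i)) := by
    intro k
    induction k with
    | zero =>
      have : (fun i => -(c i ^ 0 * u i)) = -u := by
        funext i; simp
      rw [this, hm0, hu, Matrix.mulVec_neg, Matrix.mulVec_mulVec, hUU, Matrix.one_mulVec]
      simp
    | succ k ih =>
      have step : m (k + 1) - wbar
          = ((1 : Matrix (Fin n) (Fin n) ℝ) - η • K - (η * ρ) • K ^ 2).mulVec
              (m k - wbar) := by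
        rw [hm k, Matrix.mulVec_sub]
        have hA : ((1 : Matrix (Fin n) (Fin n) ℝ) - η • K - (η * ρ) • K ^ 2).mulVec wbar
            = wbar - η • K.mulVec wbar - (η * ρ) • (K ^ 2).mulVec wbar := by
          simp [Matrix.sub_mulVec, Matrix.smul_mulVec]
        have hB : η • ((1 + ρ • K).mulVec (K.mulVec wbar))
            = η • K.mulVec wbar + (η * ρ) • (K ^ 2).mulVec wbar := by
          rw [Matrix.add_mulVec, Matrix.one_mulVec, Matrix.smul_mulVec,
            Matrix.mulVec_mulVec, ← pow_two, smul_add, smul_smul]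
        rw [hA, hB]; abel
      have hAU : ((1 : Matrix (Fin n) (Fin n) ℝ) - η • K - (η * ρ) • K ^ 2) * U
          = U * Matrix.diagonal c := by
        rw [← hdiag, Matrix.sub_mul, Matrix.sub_mul, Matrix.one_mul, Matrix.smul_mul,
          Matrix.smul_mul, hKU, hK2U, Matrix.mul_sub, Matrix.mul_sub, Matrix.mul_one,
          Matrix.mul_smul, Matrix.mul_smul]
      have hdc : Matrix.diagonal c *ᵥ (fun i => -(c i ^ k * u i))
          = fun i => -(c i ^ (k + 1) * u i) := by
        funext i
        rw [Matrix.mulVec_diagonal]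
        ring
      rw [step, ih, Matrix.mulVec_mulVec, hAU, ← Matrix.mulVec_mulVec, hdc]
  intro k
  have hKm : K.mulVec (m k - wbar) = U.mulVec (fun i => -(d i * c i ^ k * u i)) := by
    have hdd : D *ᵥ (fun i => -(c i ^ k * u i))
        = fun i => -(d i * c i ^ k * u i) := by
      funext i
      rw [hD, Matrix.mulVec_diagonal]
      ring
    rw [key k, Matrix.mulVec_mulVec, hKU, ← Matrix.mulVec_mulVec, hdd]
  have hnorm : ∀ x : Fin n → ℝ, ∑ j, (U.mulVec x j) ^ 2 = ∑ i, (x i) ^ 2 := by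
    intro x
    have h1 : Uᵀ.mulVec (U.mulVec x) = x := by
      rw [Matrix.mulVec_mulVec, hU, Matrix.one_mulVec]
    calc ∑ j, (U.mulVec x j) ^ 2 = U.mulVec x ⬝ᵥ U.mulVec x := by
          simp [dotProduct, pow_two]
      _ = Uᵀ.mulVec (U.mulVec x) ⬝ᵥ x := by
          rw [Matrix.dotProduct_mulVec, ← Matrix.mulVec_transpose]
      _ = ∑ i, (x i) ^ 2 := by rw [h1]; simp [dotProduct, pow_two]
  rw [hKm, hnorm]
  congr 1
  apply Finset.sum_congr rfl
  intro i _
  have : c i ^ (2 * k) = (c i ^ k) ^ 2 := by rw [mul_comm, pow_mul]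
  rw [this]
  ring
end

section
/- Let K = U·D·Uᵀ be a symmetric real n×n matrix with U orthogonal and D = diag(d₁,…,d_n). Let w̄ ∈ ℝ^n, η, ρ ∈ ℝ, and let ε : Ω → ℝ^n be a random vector on a probability space with E[ε] = 0 and E[ε_i ε_j] = σ²·δ_{ij} for a constant σ ≥ 0 (each product ε_i ε_j integrable). For each outcome define w₀(ε) = 0 and w_{k+1}(ε) = (I − ηK − ηρK²)w_k(ε) + η(I + ρK)(K w̄ + ε), and let m_k = w_k(0). Then for every k ≥ 0, E[(1/n)‖K(w_k(ε) − m_k)‖₂²] = (σ²/n)·Σ_{i=1}^n (1 − (1 − ηd_i − ηρd_i²)^k)². -/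
open Matrix MeasureTheory

section Conj
variable {n : ℕ} {U : Matrix (Fin n) (Fin n) ℝ}

lemma aux_conj_mul (hU : Uᵀ * U = 1) (f g : Fin n → ℝ) :
    (U * Matrix.diagonal f * Uᵀ) * (U * Matrix.diagonal g * Uᵀ)
      = U * Matrix.diagonal (fun i => f i * g i) * Uᵀ := by
  have h : Matrix.diagonal f * Matrix.diagonal g
      = Matrix.diagonal (fun i => f i * g i) := by
    rw [Matrix.diagonal_mul_diagonal]
  calc (U * Matrix.diagonal f * Uᵀ) * (U * Matrix.diagonal g * Uᵀ)
      = U * (Matrix.diagonal f * ((Uᵀ * U) * (Matrix.diagonal g * Uᵀ))) := by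
        simp only [Matrix.mul_assoc]
    _ = U * Matrix.diagonal (fun i => f i * g i) * Uᵀ := by
        rw [hU, Matrix.one_mul]
        simp only [← Matrix.mul_assoc]
        rw [Matrix.mul_assoc U (Matrix.diagonal f) (Matrix.diagonal g), h]

lemma aux_conj_add (f g : Fin n → ℝ) :
    (U * Matrix.diagonal f * Uᵀ) + (U * Matrix.diagonal g * Uᵀ)
      = U * Matrix.diagonal (fun i => f i + g i) * Uᵀ := by
  rw [← Matrix.add_mul, ← Matrix.mul_add]
  congr 1
  congr 1
  rw [← Matrix.diagonal_add]

lemma aux_A_eq {K D : Matrix (Fin n) (Fin n) ℝ} {d : Fin n → ℝ}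
    (hU : Uᵀ * U = 1) (hD : D = Matrix.diagonal d) (hK : K = U * D * Uᵀ)
    (η ρ : ℝ) :
    (1 : Matrix (Fin n) (Fin n) ℝ) - η • K - (η * ρ) • K ^ 2
      = U * Matrix.diagonal (fun i => 1 - η * d i - η * ρ * d i ^ 2) * Uᵀ := by
  have hU' : U * Uᵀ = 1 := mul_eq_one_comm.mp hU
  have hKc : K = U * Matrix.diagonal d * Uᵀ := by rw [hK, hD]
  have hK2 : K ^ 2 = U * Matrix.diagonal (fun i => d i * d i) * Uᵀ := by
    rw [pow_two, hKc, aux_conj_mul hU]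
  have hDiag : Matrix.diagonal (fun i => 1 - η * d i - η * ρ * d i ^ 2)
      = (1 : Matrix (Fin n) (Fin n) ℝ) - η • Matrix.diagonal d
        - (η * ρ) • Matrix.diagonal (fun i => d i * d i) := by
    ext i j
    rcases eq_or_ne i j with rfl | hij
    · simp only [Matrix.diagonal_apply_eq, Matrix.sub_apply, Matrix.smul_apply,
        Matrix.one_apply_eq, smul_eq_mul]
      ring
    · simp [Matrix.diagonal_apply_ne _ hij, Matrix.one_apply_ne hij]
  rw [hK2, hKc, hDiag]
  rw [Matrix.mul_sub, Matrix.mul_sub, Matrix.sub_mul, Matrix.sub_mul,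
    Matrix.mul_one, hU', Matrix.mul_smul, Matrix.smul_mul, Matrix.mul_smul,
    Matrix.smul_mul]

lemma aux_B_eq {K D : Matrix (Fin n) (Fin n) ℝ} {d : Fin n → ℝ}
    (hU : Uᵀ * U = 1) (hD : D = Matrix.diagonal d) (hK : K = U * D * Uᵀ)
    (η ρ : ℝ) :
    η • ((1 : Matrix (Fin n) (Fin n) ℝ) + ρ • K)
      = U * Matrix.diagonal (fun i => η * (1 + ρ * d i)) * Uᵀ := by
  have hU' : U * Uᵀ = 1 := mul_eq_one_comm.mp hU
  have hKc : K = U * Matrix.diagonal d * Uᵀ := by rw [hK, hD]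
  have hDiag : Matrix.diagonal (fun i => η * (1 + ρ * d i))
      = η • ((1 : Matrix (Fin n) (Fin n) ℝ) + ρ • Matrix.diagonal d) := by
    ext i j
    rcases eq_or_ne i j with rfl | hij
    · simp only [Matrix.diagonal_apply_eq, Matrix.add_apply, Matrix.smul_apply,
        Matrix.one_apply_eq, smul_eq_mul]
    · simp [Matrix.diagonal_apply_ne _ hij, Matrix.one_apply_ne hij]
  rw [hKc, hDiag]
  rw [Matrix.mul_smul, Matrix.smul_mul, Matrix.mul_add, Matrix.add_mul,
    Matrix.mul_one, hU', Matrix.mul_smul, Matrix.smul_mul]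

lemma aux_trace (hU : Uᵀ * U = 1) (f : Fin n → ℝ) :
    ∑ j, ∑ p, ((U * Matrix.diagonal f * Uᵀ) j p) ^ 2 = ∑ i, f i ^ 2 := by
  set M := U * Matrix.diagonal f * Uᵀ with hM
  have hsym : Mᵀ = M := by
    rw [hM, Matrix.transpose_mul, Matrix.transpose_mul, Matrix.transpose_transpose,
      Matrix.diagonal_transpose, Matrix.mul_assoc]
  have h1 : ∑ j, ∑ p, (M j p) ^ 2 = Matrix.trace (Mᵀ * M) := by
    simp only [Matrix.trace, Matrix.diag, Matrix.mul_apply, Matrix.transpose_apply, sq]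
    rw [Finset.sum_comm]
  rw [h1, hsym, hM, aux_conj_mul hU, Matrix.trace_mul_comm, ← Matrix.mul_assoc, hU,
    Matrix.one_mul, Matrix.trace_diagonal]
  exact Finset.sum_congr rfl fun i _ => (sq (f i)).symm ▸ rfl
end Conj

lemma aux_var_integral {Ω : Type*} [MeasurableSpace Ω] (P : Measure Ω) (n : ℕ)
    (M : Matrix (Fin n) (Fin n) ℝ) (ε : Ω → Fin n → ℝ) (σ : ℝ)
    (hεprodint : ∀ i j, Integrable (fun ω => ε ω i * ε ω j) P)
    (hεcov : ∀ i j, ∫ ω, ε ω i * ε ω j ∂P = if i = j then σ ^ 2 else 0) :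
    ∫ ω, (1 / (n : ℝ)) * ∑ j, (M.mulVec (ε ω) j) ^ 2 ∂P
      = (σ ^ 2 / (n : ℝ)) * ∑ j, ∑ p, (M j p) ^ 2 := by
  have hrw : ∀ ω, (1 / (n : ℝ)) * ∑ j, (M.mulVec (ε ω) j) ^ 2
      = (1 / (n : ℝ)) * ∑ j, ∑ p, ∑ q, (M j p * M j q) * (ε ω p * ε ω q) := by
    intro ω
    congr 1
    refine Finset.sum_congr rfl fun j _ => ?_
    have : M.mulVec (ε ω) j = ∑ p, M j p * ε ω p := by
      simp [Matrix.mulVec, dotProduct]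
    rw [this, sq, Finset.sum_mul_sum]
    exact Finset.sum_congr rfl fun p _ => Finset.sum_congr rfl fun q _ => by ring
  simp only [hrw]
  have hintpq : ∀ (j p : Fin n),
      Integrable (fun ω => ∑ q, (M j p * M j q) * (ε ω p * ε ω q)) P :=
    fun j p => integrable_finset_sum _ fun q _ => (hεprodint p q).const_mul _
  have hintp : ∀ j : Fin n,
      Integrable (fun ω => ∑ p, ∑ q, (M j p * M j q) * (ε ω p * ε ω q)) P :=
    fun j => integrable_finset_sum _ fun p _ => hintpq j p
  rw [MeasureTheory.integral_const_mul,
    integral_finset_sum _ fun j _ => hintp j]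
  have key : ∀ j : Fin n,
      ∫ ω, (∑ p, ∑ q, (M j p * M j q) * (ε ω p * ε ω q)) ∂P
        = ∑ p, (M j p) ^ 2 * σ ^ 2 := by
    intro j
    rw [integral_finset_sum _ fun p _ => hintpq j p]
    refine Finset.sum_congr rfl fun p _ => ?_
    rw [integral_finset_sum _ fun q _ => (hεprodint p q).const_mul _]
    have : ∀ q : Fin n, ∫ ω, (M j p * M j q) * (ε ω p * ε ω q) ∂P
        = (M j p * M j q) * (if p = q then σ ^ 2 else 0) := by
      intro q
      rw [MeasureTheory.integral_const_mul, hεcov]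
    simp only [this, mul_ite, mul_zero]
    rw [Finset.sum_ite_eq]
    simp [sq]
  simp only [key]
  rw [show (∑ j, ∑ p, (M j p) ^ 2 * σ ^ 2) = σ ^ 2 * ∑ j, ∑ p, (M j p) ^ 2 by
    simp [Finset.mul_sum, mul_comm]]
  ring

/-- Variance of the KernelSAM iterates for a symmetric (possibly indefinite) Gram
matrix `K = U D Uᵀ` with zero-mean noise of covariance `σ²·I`:
`E[(1/n)‖K(w_k(ε) − m_k)‖₂²] = (σ²/n) Σ_i (1 − (1 − ηd_i − ηρd_i²)^k)²`. -/
theorem kernelSAM_variance (n : ℕ) (hn : 0 < n)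
    (K U D : Matrix (Fin n) (Fin n) ℝ) (d : Fin n → ℝ)
    (hU : Uᵀ * U = 1) (hD : D = Matrix.diagonal d) (hK : K = U * D * Uᵀ)
    (wbar : Fin n → ℝ) (η ρ : ℝ)
    {Ω : Type*} [MeasurableSpace Ω] (P : Measure Ω) [IsProbabilityMeasure P]
    (ε : Ω → Fin n → ℝ) (hεmeas : Measurable ε)
    (σ : ℝ) (hσ : 0 ≤ σ)
    (hεint : ∀ i, Integrable (fun ω => ε ω i) P)
    (hεmean : ∀ i, ∫ ω, ε ω i ∂P = 0)
    (hεprodint : ∀ i j, Integrable (fun ω => ε ω i * ε ω j) P)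
    (hεcov : ∀ i j, ∫ ω, ε ω i * ε ω j ∂P = if i = j then σ ^ 2 else 0)
    (w : ℕ → (Fin n → ℝ) → Fin n → ℝ)
    (hw0 : ∀ e, w 0 e = 0)
    (hw : ∀ k e, w (k + 1) e
        = (1 - η • K - (η * ρ) • K ^ 2).mulVec (w k e)
          + η • ((1 + ρ • K).mulVec (K.mulVec wbar + e)))
    (m : ℕ → Fin n → ℝ) (hm : ∀ k, m k = w k 0) :
    ∀ k : ℕ,
      ∫ ω, (1 / (n : ℝ)) * ∑ j, (K.mulVec (w k (ε ω) - m k) j) ^ 2 ∂P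
        = (σ ^ 2 / (n : ℝ)) *
            ∑ i, (1 - (1 - η * d i - η * ρ * d i ^ 2) ^ k) ^ 2 := by
  intro k
  have hA := aux_A_eq hU hD hK η ρ
  have hB := aux_B_eq hU hD hK η ρ
  set a : Fin n → ℝ := fun i => 1 - η * d i - η * ρ * d i ^ 2 with ha
  set g : ℕ → Fin n → ℝ :=
    fun k i => (∑ j ∈ Finset.range k, a i ^ j) * (η * (1 + ρ * d i)) with hg
  have hgrec : ∀ k : ℕ, (fun i => a i * g k i + η * (1 + ρ * d i)) = g (k + 1) := by
    intro k
    funext i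
    simp only [hg]
    rw [geom_sum_succ]
    ring
  have hlin : ∀ (k : ℕ) (e : Fin n → ℝ),
      w k e - w k 0 = (U * Matrix.diagonal (g k) * Uᵀ).mulVec e := by
    intro k
    induction k with
    | zero =>
      intro e
      have hg0 : Matrix.diagonal (g 0) = 0 := by
        rw [show g 0 = fun _ : Fin n => (0 : ℝ) by funext i; simp [hg]]
        simp
      simp [hw0, hg0]
    | succ k ih =>
      intro e
      rw [hw k e, hw k 0]
      have key : (1 - η • K - (η * ρ) • K ^ 2).mulVec (w k e)
            + η • ((1 + ρ • K).mulVec (K.mulVec wbar + e))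
          - ((1 - η • K - (η * ρ) • K ^ 2).mulVec (w k 0)
            + η • ((1 + ρ • K).mulVec (K.mulVec wbar + 0)))
          = (1 - η • K - (η * ρ) • K ^ 2).mulVec (w k e - w k 0)
            + (η • (1 + ρ • K)).mulVec e := by
        rw [Matrix.mulVec_sub, Matrix.mulVec_add, Matrix.mulVec_add,
          Matrix.mulVec_zero, add_zero, smul_add]
        simp only [Matrix.smul_mulVec]
        abel
      rw [key, ih, Matrix.mulVec_mulVec, hA, hB, aux_conj_mul hU,
        ← Matrix.add_mulVec, aux_conj_add, hgrec]
  have hkey : ∀ e : Fin n → ℝ, K.mulVec (w k e - w k 0)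
      = (U * Matrix.diagonal (fun i => 1 - a i ^ k) * Uᵀ).mulVec e := by
    intro e
    rw [hlin k e, Matrix.mulVec_mulVec, hK, hD, aux_conj_mul hU]
    have hfun : (fun i => d i * g k i) = fun i => 1 - a i ^ k := by
      funext i
      have h := geom_sum_mul (a i) k
      have h2 : (1 : ℝ) - a i = η * d i + η * ρ * d i ^ 2 := by
        simp only [ha]; ring
      simp only [hg]
      linear_combination (-1 : ℝ) * h - (∑ j ∈ Finset.range k, a i ^ j) * h2
    rw [hfun]
  have hint : ∀ ω, K.mulVec (w k (ε ω) - m k)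
      = (U * Matrix.diagonal (fun i => 1 - a i ^ k) * Uᵀ).mulVec (ε ω) := by
    intro ω
    rw [hm, hkey]
  calc ∫ ω, (1 / (n : ℝ)) * ∑ j, (K.mulVec (w k (ε ω) - m k) j) ^ 2 ∂P
      = ∫ ω, (1 / (n : ℝ)) *
          ∑ j, ((U * Matrix.diagonal (fun i => 1 - a i ^ k) * Uᵀ).mulVec (ε ω) j) ^ 2 ∂P := by
        simp only [hint]
    _ = (σ ^ 2 / (n : ℝ)) *
          ∑ j, ∑ p, ((U * Matrix.diagonal (fun i => 1 - a i ^ k) * Uᵀ) j p) ^ 2 :=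
        aux_var_integral P n _ ε σ hεprodint hεcov
    _ = (σ ^ 2 / (n : ℝ)) * ∑ i, (1 - a i ^ k) ^ 2 := by
        rw [aux_trace hU]
end

section
/- Let n ≥ 1, let d₁,…,d_n be reals with d_n < 0, let u ∈ ℝ^n, σ > 0, η > 0, ρ ≥ 0, and for s ≥ 0 define Error_s(k) = (1/n)·Σ_{i=1}^n (1 − ηd_i − η·s·d_i²)^{2k} d_i² u_i² + (σ²/n)·Σ_{i=1}^n (1 − (1 − ηd_i − η·s·d_i²)^k)². Then: (1) the gradient descent error diverges, i.e. Error₀(k) → ∞ as k → ∞; and (2) if in addition |1 − ηd_i − ηρd_i²| ≤ 1 for every i, then the SAM error stays bounded, i.e. there is a constant C with Error_ρ(k) ≤ C for all k. -/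
/-!
Both errors are weighted sums, over the spectrum, of bias terms `x_i^(2k) d_i² u_i²` and
variance terms `(1 - x_i^k)²`, where `x_i = 1 - ηd_i - ηs d_i²` is the contraction factor of
the iteration along the `i`-th eigendirection. For gradient descent the factor of the negative
eigenvalue is `1 - ηd_n > 1`, so its variance term alone grows like `(1 - ηd_n)^(2k)`. Under
`|x_i| ≤ 1` every bias term is at most `d_i² u_i²` and every variance term at most `4`.
-/

open Filter Finset

noncomputable section

def spectralError (n : ℕ) (x d u : Fin n → ℝ) (σ : ℝ) (k : ℕ) : ℝ :=
  (1 / (n : ℝ)) * (∑ i, x i ^ (2 * k) * d i ^ 2 * u i ^ 2)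
    + (σ ^ 2 / (n : ℝ)) * (∑ i, (1 - x i ^ k) ^ 2)

end

lemma pow_two_mul_le_one_of_abs_le_one {x : ℝ} (hx : |x| ≤ 1) (k : ℕ) : x ^ (2 * k) ≤ 1 := by
  rw [pow_mul]
  exact pow_le_one₀ (sq_nonneg x) (sq_le_one_iff_abs_le_one x |>.mpr hx)

lemma one_sub_pow_sq_le_four {x : ℝ} (hx : |x| ≤ 1) (k : ℕ) : (1 - x ^ k) ^ 2 ≤ 4 := by
  obtain ⟨hlo, hhi⟩ := abs_le.mp (abs_pow x k ▸ pow_le_one₀ (abs_nonneg x) hx)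
  nlinarith

section SpectralError

variable {n : ℕ} (x d u : Fin n → ℝ) (σ : ℝ) (k : ℕ)

lemma variance_term_le_spectralError (j : Fin n) :
    σ ^ 2 / n * (1 - x j ^ k) ^ 2 ≤ spectralError n x d u σ k := by
  have hbias : 0 ≤ 1 / (n : ℝ) * ∑ i, x i ^ (2 * k) * d i ^ 2 * u i ^ 2 := by
    refine mul_nonneg (by positivity) (sum_nonneg fun i _ => ?_)
    have : 0 ≤ x i ^ (2 * k) := (even_two_mul k).pow_nonneg _
    positivity
  have hvar : (1 - x j ^ k) ^ 2 ≤ ∑ i, (1 - x i ^ k) ^ 2 :=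
    single_le_sum (f := fun i => (1 - x i ^ k) ^ 2) (fun i _ => sq_nonneg _) (mem_univ j)
  exact le_add_of_nonneg_of_le hbias (mul_le_mul_of_nonneg_left hvar (by positivity))

lemma spectralError_le_of_abs_le_one (hx : ∀ i, |x i| ≤ 1) :
    spectralError n x d u σ k
      ≤ 1 / (n : ℝ) * ∑ i, d i ^ 2 * u i ^ 2 + σ ^ 2 / n * ∑ _i : Fin n, (4 : ℝ) := by
  have hbias : ∑ i, x i ^ (2 * k) * d i ^ 2 * u i ^ 2 ≤ ∑ i, d i ^ 2 * u i ^ 2 :=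
    sum_le_sum fun i _ => by
      simpa only [mul_assoc] using mul_le_of_le_one_left (by positivity)
        (pow_two_mul_le_one_of_abs_le_one (hx i) k)
  have hvar : ∑ i, (1 - x i ^ k) ^ 2 ≤ ∑ _i : Fin n, (4 : ℝ) :=
    sum_le_sum fun i _ => one_sub_pow_sq_le_four (hx i) k
  unfold spectralError
  gcongr

end SpectralError

lemma tendsto_one_sub_pow_sq_atTop {a : ℝ} (ha : 1 < a) :
    Tendsto (fun k : ℕ => (1 - a ^ k) ^ 2) atTop atTop := by
  have h : Tendsto (fun k : ℕ => a ^ k - 1) atTop atTop :=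
    tendsto_atTop_add_const_right _ _ (tendsto_pow_atTop_atTop_of_one_lt ha)
  simpa only [sub_sq_comm (1 : ℝ), sq] using h.atTop_mul_atTop₀ h

theorem gd_error_diverges_sam_bounded_general (n : ℕ) (hn : 0 < n)
    (d u : Fin n → ℝ)
    (hdn : d ⟨n - 1, Nat.sub_lt hn Nat.one_pos⟩ < 0)
    (σ : ℝ) (hσ : 0 < σ)
    (η ρ : ℝ) (hη : 0 < η)
    (Err : ℝ → ℕ → ℝ)
    (hErr : ∀ s k, Err s k
        = (1 / (n : ℝ)) *
            (∑ i, (1 - η * d i - η * s * d i ^ 2) ^ (2 * k) * d i ^ 2 * u i ^ 2)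
          + (σ ^ 2 / (n : ℝ)) *
            (∑ i, (1 - (1 - η * d i - η * s * d i ^ 2) ^ k) ^ 2)) :
    Filter.Tendsto (Err 0) Filter.atTop Filter.atTop ∧
    ((∀ i, |1 - η * d i - η * ρ * d i ^ 2| ≤ 1) →
      ∃ C : ℝ, ∀ k : ℕ, Err ρ k ≤ C) := by
  set factor : ℝ → Fin n → ℝ := fun s i => 1 - η * d i - η * s * d i ^ 2
  have hErr' (s : ℝ) (k : ℕ) : Err s k = spectralError n (factor s) d u σ k := hErr s k
  refine ⟨?_, fun hx => ⟨_, fun k => (hErr' ρ k).trans_le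
    (spectralError_le_of_abs_le_one _ d u σ k hx)⟩⟩
  set j : Fin n := ⟨n - 1, Nat.sub_lt hn Nat.one_pos⟩
  have hj : 1 < factor 0 j := by
    have := mul_neg_of_pos_of_neg hη hdn
    simp only [factor]
    linarith
  have hcoef : 0 < σ ^ 2 / (n : ℝ) := by positivity
  refine tendsto_atTop_mono (fun k => ?_)
    ((tendsto_one_sub_pow_sq_atTop hj).const_mul_atTop hcoef)
  exact (variance_term_le_spectralError _ d u σ k j).trans_eq (hErr' 0 k).symm

/-- In the indefinite kernel setting (some eigenvalue `d_n < 0`), the gradient descent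
error diverges as `k → ∞`, while if `|1 − ηd_i − ηρd_i²| ≤ 1` for all `i` the SAM error
stays bounded. -/
theorem gd_error_diverges_sam_bounded (n : ℕ) (hn : 0 < n)
    (d u : Fin n → ℝ)
    (hdn : d ⟨n - 1, Nat.sub_lt hn Nat.one_pos⟩ < 0)
    (σ : ℝ) (hσ : 0 < σ)
    (η ρ : ℝ) (hη : 0 < η) (hρ : 0 ≤ ρ)
    (Err : ℝ → ℕ → ℝ)
    (hErr : ∀ s k, Err s k
        = (1 / (n : ℝ)) *
            (∑ i, (1 - η * d i - η * s * d i ^ 2) ^ (2 * k) * d i ^ 2 * u i ^ 2)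
          + (σ ^ 2 / (n : ℝ)) *
            (∑ i, (1 - (1 - η * d i - η * s * d i ^ 2) ^ k) ^ 2)) :
    Filter.Tendsto (Err 0) Filter.atTop Filter.atTop ∧
    ((∀ i, |1 - η * d i - η * ρ * d i ^ 2| ≤ 1) →
      ∃ C : ℝ, ∀ k : ℕ, Err ρ k ≤ C) :=
  gd_error_diverges_sam_bounded_general n hn d u hdn σ hσ η ρ hη Err hErr
end

section
/- Let A ∈ ℝ^{n×p} admit the compact SVD A = V₁Σ₁U₁ᵀ with U₁ᵀU₁ = V₁ᵀV₁ = I_r, Σ₁ = diag(σ₁,…,σ_r), σ_i > 0, and set d_i = σ_i², d_max = max_i d_i, d_min = min_i d_i. Let w̄ ∈ ℝ^p, w₀ = U₁U₁ᵀw₀, u = U₁ᵀ(w̄ − w₀), and let η > 0, ρ > 0 satisfy 0 < 1 − ηd_i − ηρd_i² < 1 for all i. Let ρ₀ > 0. For s ∈ {0, ρ}, let m_k^s be the iterates m₀^s = w₀, m_{k+1}^s = m_k^s − η·G₀(m_k^s + s·G₀(m_k^s)) with G₀(w) = AᵀA(w − w̄), and define the sharpness κ_s(k) = sup_{‖ε‖₂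 ≤ ρ₀} [F(m_k^s + ε) − F(m_k^s)] where F(w) = ½(w − w̄)ᵀAᵀA(w − w̄). Then for every k ≥ 1: κ₀(k) − κ_ρ(k) ≥ ρ₀²·(d_min − d_max)/2 + ρ₀·( √(Σ_{i=1}^r (1 − ηd_i)^{2k} d_i² u_i²) − √(Σ_{i=1}^r (1 − ηd_i − ηρd_i²)^{2k} d_i² u_i²) ). -/
/-!
Since `AᵀA = U₁ diag(d) U₁ᵀ`, both iterations act diagonally in the coordinates `U₁ᵀ(w - w̄)`,
multiplying the `i`-th one by `1 - ηdᵢ - ηρdᵢ²` at each step (`ρ = 0` for gradient descent).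
The loss increment at `w` is `⟨ε, g⟩ + ½ εᵀAᵀAε` with `g = AᵀA(w - w̄)`, so its supremum over the
ball of radius `ρ₀` lies between `ρ₀‖g‖ + ρ₀² d_min / 2` (take `ε = ρ₀ g / ‖g‖`, which lies in the
range of `U₁`) and `ρ₀‖g‖ + ρ₀² d_max / 2` (Cauchy–Schwarz). Along the two trajectories `‖g‖` is
given by the two square roots of the statement.
-/

open Matrix

noncomputable def quadIncrement {m : Type*} [Fintype m] (B : Matrix m m ℝ) (g e : m → ℝ) : ℝ :=
  e ⬝ᵥ g + 1 / 2 * (e ⬝ᵥ B *ᵥ e)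

def euclidClosedBall {m : Type*} [Fintype m] (ρ0 : ℝ) : Set (m → ℝ) :=
  {e | √(∑ j, e j ^ 2) ≤ ρ0}

theorem transpose_mul_self_of_svd {R l m n : Type*} [CommRing R] [Fintype l] [Fintype n]
    [DecidableEq n] {V : Matrix l n R} (hV : Vᵀ * V = 1) (s : n → R) (U : Matrix m n R) :
    (V * diagonal s * Uᵀ)ᵀ * (V * diagonal s * Uᵀ) = U * diagonal (fun i => s i ^ 2) * Uᵀ := by
  have hss : diagonal s * diagonal s = diagonal fun i => s i ^ 2 := by
    rw [diagonal_mul_diagonal]; simp only [sq]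
  simp only [transpose_mul, transpose_transpose, diagonal_transpose, Matrix.mul_assoc]
  rw [← Matrix.mul_assoc Vᵀ, hV, Matrix.one_mul, ← Matrix.mul_assoc (diagonal s), hss]

theorem half_dotProduct_mulVec_add_sub {m : Type*} [Fintype m] {B : Matrix m m ℝ} (hB : Bᵀ = B)
    (x e : m → ℝ) :
    1 / 2 * ((x + e) ⬝ᵥ B *ᵥ (x + e)) - 1 / 2 * (x ⬝ᵥ B *ᵥ x) = quadIncrement B (B *ᵥ x) e := by
  have hsymm : x ⬝ᵥ B *ᵥ e = e ⬝ᵥ B *ᵥ x := by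
    rw [dotProduct_mulVec, ← mulVec_transpose, hB, dotProduct_comm]
  rw [quadIncrement, mulVec_add, dotProduct_add, add_dotProduct, add_dotProduct, hsymm]
  ring

theorem sum_sq_eq_dotProduct_self {m : Type*} [Fintype m] (v : m → ℝ) :
    ∑ i, v i ^ 2 = v ⬝ᵥ v := by
  simp only [dotProduct, sq]

theorem exists_dotProduct_self_eq_sq_and_dotProduct_eq {n : Type*} [Fintype n] [Nonempty n]
    (ρ0 : ℝ) (y : n → ℝ) :
    ∃ z : n → ℝ, z ⬝ᵥ z = ρ0 ^ 2 ∧ z ⬝ᵥ y = ρ0 * √(y ⬝ᵥ y) := by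
  classical
  rcases eq_or_ne y 0 with rfl | hy
  · refine ⟨Pi.single (Classical.arbitrary n) ρ0, ?_, by simp⟩
    simp [sq]
  · have hyy : 0 < y ⬝ᵥ y :=
      (Finset.sum_nonneg fun i _ => mul_self_nonneg (y i)).lt_of_ne
        (Ne.symm (dotProduct_self_eq_zero.not.2 hy))
    have hpos : 0 < √(y ⬝ᵥ y) := Real.sqrt_pos.2 hyy
    set t := √(y ⬝ᵥ y)
    have hyt : y ⬝ᵥ y = t ^ 2 := (Real.sq_sqrt hyy.le).symm
    refine ⟨(ρ0 / t) • y, ?_, ?_⟩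
    · rw [smul_dotProduct, dotProduct_smul, smul_eq_mul, smul_eq_mul, hyt]
      field_simp
    · rw [smul_dotProduct, smul_eq_mul, hyt]
      field_simp

section OrthonormalColumns

variable {m n : Type*} [Fintype m] [Fintype n] [DecidableEq n] {U : Matrix m n ℝ}

theorem mulVec_dotProduct_mulVec_of_transpose_mul_self (hU : Uᵀ * U = 1) (y z : n → ℝ) :
    U *ᵥ y ⬝ᵥ U *ᵥ z = y ⬝ᵥ z := by
  rw [dotProduct_mulVec, ← mulVec_transpose, mulVec_mulVec, hU, one_mulVec]

theorem transpose_mulVec_dotProduct_self_le (hU : Uᵀ * U = 1) (e : m → ℝ) :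
    Uᵀ *ᵥ e ⬝ᵥ Uᵀ *ᵥ e ≤ e ⬝ᵥ e := by
  set y := Uᵀ *ᵥ e
  have hey : e ⬝ᵥ U *ᵥ y = y ⬝ᵥ y := by
    rw [dotProduct_mulVec, ← mulVec_transpose]
  have hres : (e - U *ᵥ y) ⬝ᵥ (e - U *ᵥ y) = e ⬝ᵥ e - y ⬝ᵥ y := by
    rw [sub_dotProduct, dotProduct_sub, dotProduct_sub, dotProduct_comm (U *ᵥ y) e,
      mulVec_dotProduct_mulVec_of_transpose_mul_self hU, hey]
    ring
  have hnonneg : 0 ≤ (e - U *ᵥ y) ⬝ᵥ (e - U *ᵥ y) :=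
    Finset.sum_nonneg fun j _ => mul_self_nonneg ((e - U *ᵥ y) j)
  linarith

variable (d : n → ℝ)

theorem spectral_mulVec (e : m → ℝ) : (U * diagonal d * Uᵀ) *ᵥ e = U *ᵥ (d * Uᵀ *ᵥ e) := by
  rw [← mulVec_mulVec, ← mulVec_mulVec]
  congr 1
  ext i
  exact mulVec_diagonal d _ i

theorem transpose_mulVec_spectral_mulVec (hU : Uᵀ * U = 1) (e : m → ℝ) :
    Uᵀ *ᵥ ((U * diagonal d * Uᵀ) *ᵥ e) = d * Uᵀ *ᵥ e := by
  rw [spectral_mulVec, mulVec_mulVec, hU, one_mulVec]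

theorem dotProduct_spectral_mulVec (e : m → ℝ) :
    e ⬝ᵥ (U * diagonal d * Uᵀ) *ᵥ e = ∑ i, d i * (Uᵀ *ᵥ e) i ^ 2 := by
  rw [spectral_mulVec, dotProduct_mulVec, ← mulVec_transpose]
  exact Finset.sum_congr rfl fun i _ => by simp only [Pi.mul_apply]; ring

theorem sum_sq_spectral_mulVec (hU : Uᵀ * U = 1) (e : m → ℝ) :
    ∑ j, ((U * diagonal d * Uᵀ) *ᵥ e) j ^ 2 = ∑ i, (d i * (Uᵀ *ᵥ e) i) ^ 2 := by
  rw [sum_sq_eq_dotProduct_self, spectral_mulVec,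
    mulVec_dotProduct_mulVec_of_transpose_mul_self hU, ← sum_sq_eq_dotProduct_self]
  simp only [Pi.mul_apply]

theorem quadIncrement_le (hU : Uᵀ * U = 1) {dmax ρ0 : ℝ} (hdmax : ∀ i, d i ≤ dmax)
    (hdmax0 : 0 ≤ dmax) (g : m → ℝ) {e : m → ℝ} (he : e ∈ euclidClosedBall ρ0) :
    quadIncrement (U * diagonal d * Uᵀ) g e ≤ ρ0 * √(∑ j, g j ^ 2) + ρ0 ^ 2 * dmax / 2 := by
  have hρ0 : 0 ≤ ρ0 := (Real.sqrt_nonneg _).trans he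
  have hee : e ⬝ᵥ e ≤ ρ0 ^ 2 := by
    rw [← sum_sq_eq_dotProduct_self]
    exact (Real.sqrt_le_left hρ0).1 he
  have hlin : e ⬝ᵥ g ≤ ρ0 * √(∑ j, g j ^ 2) :=
    (Real.sum_mul_le_sqrt_mul_sqrt _ e g).trans
      (mul_le_mul_of_nonneg_right he (Real.sqrt_nonneg _))
  have hquad : e ⬝ᵥ (U * diagonal d * Uᵀ) *ᵥ e ≤ dmax * ρ0 ^ 2 := calc
    _ = ∑ i, d i * (Uᵀ *ᵥ e) i ^ 2 := dotProduct_spectral_mulVec d e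
    _ ≤ ∑ i, dmax * (Uᵀ *ᵥ e) i ^ 2 :=
      Finset.sum_le_sum fun i _ => mul_le_mul_of_nonneg_right (hdmax i) (sq_nonneg _)
    _ = dmax * (Uᵀ *ᵥ e ⬝ᵥ Uᵀ *ᵥ e) := by rw [← Finset.mul_sum, sum_sq_eq_dotProduct_self]
    _ ≤ dmax * ρ0 ^ 2 :=
      mul_le_mul_of_nonneg_left ((transpose_mulVec_dotProduct_self_le hU e).trans hee) hdmax0
  rw [quadIncrement]
  linarith

theorem bddAbove_quadIncrement_image (hU : Uᵀ * U = 1) (g : m → ℝ) (ρ0 : ℝ) :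
    BddAbove (quadIncrement (U * diagonal d * Uᵀ) g '' euclidClosedBall ρ0) := by
  obtain ⟨M, hM⟩ := (Set.finite_range d).bddAbove
  refine ⟨ρ0 * √(∑ j, g j ^ 2) + ρ0 ^ 2 * max M 0 / 2, ?_⟩
  rintro _ ⟨e, he, rfl⟩
  exact quadIncrement_le d hU (fun i => (hM ⟨i, rfl⟩).trans (le_max_left M 0))
    (le_max_right M 0) g he

theorem sSup_quadIncrement_le (hU : Uᵀ * U = 1) {dmax ρ0 : ℝ} (hdmax : ∀ i, d i ≤ dmax)
    (hdmax0 : 0 ≤ dmax) (hρ0 : 0 ≤ ρ0) (x : m → ℝ) :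
    sSup (quadIncrement (U * diagonal d * Uᵀ) ((U * diagonal d * Uᵀ) *ᵥ x) ''
        euclidClosedBall ρ0)
      ≤ ρ0 * √(∑ i, (d i * (Uᵀ *ᵥ x) i) ^ 2) + ρ0 ^ 2 * dmax / 2 := by
  rw [← sum_sq_spectral_mulVec d hU]
  refine csSup_le ⟨_, ⟨0, by simpa [euclidClosedBall] using hρ0, rfl⟩⟩ ?_
  rintro _ ⟨e, he, rfl⟩
  exact quadIncrement_le d hU hdmax hdmax0 _ he

theorem le_sSup_quadIncrement [Nonempty n] (hU : Uᵀ * U = 1) {dmin ρ0 : ℝ}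
    (hdmin : ∀ i, dmin ≤ d i) (hρ0 : 0 ≤ ρ0) (x : m → ℝ) :
    ρ0 * √(∑ i, (d i * (Uᵀ *ᵥ x) i) ^ 2) + ρ0 ^ 2 * dmin / 2
      ≤ sSup (quadIncrement (U * diagonal d * Uᵀ) ((U * diagonal d * Uᵀ) *ᵥ x) ''
        euclidClosedBall ρ0) := by
  obtain ⟨z, hzz, hzy⟩ := exists_dotProduct_self_eq_sq_and_dotProduct_eq ρ0 (d * Uᵀ *ᵥ x)
  have hUz : Uᵀ *ᵥ (U *ᵥ z) = z := by rw [mulVec_mulVec, hU, one_mulVec]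
  refine le_csSup_of_le (bddAbove_quadIncrement_image d hU _ ρ0) ⟨U *ᵥ z, ?_, rfl⟩ ?_
  · rw [euclidClosedBall, Set.mem_ofPred_eq, sum_sq_eq_dotProduct_self,
      mulVec_dotProduct_mulVec_of_transpose_mul_self hU, hzz, Real.sqrt_sq hρ0]
  · have hlin : U *ᵥ z ⬝ᵥ (U * diagonal d * Uᵀ) *ᵥ x
        = ρ0 * √(∑ i, (d i * (Uᵀ *ᵥ x) i) ^ 2) := by
      rw [spectral_mulVec, mulVec_dotProduct_mulVec_of_transpose_mul_self hU, hzy,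
        sum_sq_eq_dotProduct_self]
      rfl
    have hquad : dmin * ρ0 ^ 2 ≤ U *ᵥ z ⬝ᵥ (U * diagonal d * Uᵀ) *ᵥ (U *ᵥ z) := calc
      dmin * ρ0 ^ 2 = ∑ i, dmin * z i ^ 2 := by
        rw [← hzz, ← sum_sq_eq_dotProduct_self, Finset.mul_sum]
      _ ≤ ∑ i, d i * z i ^ 2 :=
        Finset.sum_le_sum fun i _ => mul_le_mul_of_nonneg_right (hdmin i) (sq_nonneg _)
      _ = _ := by rw [dotProduct_spectral_mulVec, hUz]
    rw [quadIncrement]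
    linarith

theorem transpose_mulVec_sam_iterate_sub (hU : Uᵀ * U = 1) (η ρ : ℝ) (wbar : m → ℝ)
    (x : ℕ → m → ℝ) (hx : ∀ k, x (k + 1) = x k - η • (U * diagonal d * Uᵀ) *ᵥ
      (x k + ρ • (U * diagonal d * Uᵀ) *ᵥ (x k - wbar) - wbar)) (k : ℕ) :
    Uᵀ *ᵥ (x k - wbar) = (fun i => (1 - η * d i - η * ρ * d i ^ 2) ^ k) * Uᵀ *ᵥ (x 0 - wbar) := by
  induction k with
  | zero => ext i; simp
  | succ k ih =>
    rw [hx, sub_right_comm, add_sub_right_comm, mulVec_sub, mulVec_smul,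
      transpose_mulVec_spectral_mulVec d hU, mulVec_add, mulVec_smul,
      transpose_mulVec_spectral_mulVec d hU, ih]
    ext i
    simp only [Pi.sub_apply, Pi.mul_apply, Pi.add_apply, Pi.smul_apply, smul_eq_mul]
    ring

end OrthonormalColumns

theorem sam_is_flatter_general (n p r : ℕ)
    (A : Matrix (Fin n) (Fin p) ℝ)
    (U1 : Matrix (Fin p) (Fin r) ℝ) (V1 : Matrix (Fin n) (Fin r) ℝ)
    (s : Fin r → ℝ)
    (hU : U1ᵀ * U1 = 1) (hV : V1ᵀ * V1 = 1)
    (hA : A = V1 * Matrix.diagonal s * U1ᵀ)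
    (d : Fin r → ℝ) (hd : ∀ i, d i = s i ^ 2)
    (dmax dmin : ℝ)
    (hdmax : IsGreatest (Set.range d) dmax)
    (hdmin : IsLeast (Set.range d) dmin)
    (wbar w0 : Fin p → ℝ)
    (u : Fin r → ℝ) (hu : u = U1ᵀ.mulVec (wbar - w0))
    (η ρ : ℝ)
    (ρ0 : ℝ) (hρ0 : 0 < ρ0)
    (G0 : (Fin p → ℝ) → (Fin p → ℝ))
    (hG0 : ∀ w, G0 w = (Aᵀ * A).mulVec (w - wbar))
    (F : (Fin p → ℝ) → ℝ)
    (hF : ∀ w, F w = (1 / 2) * ((w - wbar) ⬝ᵥ (Aᵀ * A).mulVec (w - wbar)))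
    (mSAM mGD : ℕ → Fin p → ℝ)
    (hS0 : mSAM 0 = w0) (hGD0 : mGD 0 = w0)
    (hS : ∀ k, mSAM (k + 1) = mSAM k - η • G0 (mSAM k + ρ • G0 (mSAM k)))
    (hGD : ∀ k, mGD (k + 1) = mGD k - η • G0 (mGD k))
    (κ : (ℕ → Fin p → ℝ) → ℕ → ℝ)
    (hκ : ∀ m k, κ m k
        = sSup ((fun e : Fin p → ℝ => F (m k + e) - F (m k)) ''
            {e | Real.sqrt (∑ i, (e i) ^ 2) ≤ ρ0})) :
    ∀ k : ℕ, 1 ≤ k →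
      ρ0 ^ 2 * (dmin - dmax) / 2
          + ρ0 * (Real.sqrt (∑ i, (1 - η * d i) ^ (2 * k) * d i ^ 2 * u i ^ 2)
              - Real.sqrt (∑ i,
                  (1 - η * d i - η * ρ * d i ^ 2) ^ (2 * k) * d i ^ 2 * u i ^ 2))
        ≤ κ mGD k - κ mSAM k := by
  intro k _
  have hB : Aᵀ * A = U1 * diagonal d * U1ᵀ := by
    rw [hA, transpose_mul_self_of_svd hV, ← funext hd]
  have hκB : ∀ m, κ m k = sSup (quadIncrement (U1 * diagonal d * U1ᵀ)
      ((U1 * diagonal d * U1ᵀ) *ᵥ (m k - wbar)) '' euclidClosedBall ρ0) := fun m => by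
    have hBsymm : (Aᵀ * A)ᵀ = Aᵀ * A := by rw [transpose_mul, transpose_transpose]
    simp only [hκ, hF, add_sub_right_comm _ _ wbar, half_dotProduct_mulVec_add_sub hBsymm]
    rw [hB]
    rfl
  obtain ⟨i₀, -⟩ := hdmin.1
  have : Nonempty (Fin r) := ⟨i₀⟩
  have hdmax0 : 0 ≤ dmax := (hd i₀ ▸ sq_nonneg (s i₀)).trans (hdmax.2 ⟨i₀, rfl⟩)
  have hx0 : U1ᵀ *ᵥ (w0 - wbar) = -u := by rw [hu, ← mulVec_neg, neg_sub]
  have hGDx := transpose_mulVec_sam_iterate_sub d hU η 0 wbar mGD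
    (fun k => by simp only [hGD, hG0, hB, zero_smul, add_zero]) k
  have hSAMx := transpose_mulVec_sam_iterate_sub d hU η ρ wbar mSAM
    (fun k => by rw [hS, hG0, hG0, hB]) k
  have hnorm : ∀ c : Fin r → ℝ, ∑ i, (d i * ((fun i => c i ^ k) * -u) i) ^ 2
      = ∑ i, c i ^ (2 * k) * d i ^ 2 * u i ^ 2 := fun c =>
    Finset.sum_congr rfl fun i _ => by simp only [Pi.mul_apply, Pi.neg_apply]; ring
  have hlow := le_sSup_quadIncrement d hU (fun i => hdmin.2 ⟨i, rfl⟩) hρ0.le (mGD k - wbar)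
  have hup :=
    sSup_quadIncrement_le d hU (fun i => hdmax.2 ⟨i, rfl⟩) hdmax0 hρ0.le (mSAM k - wbar)
  rw [hGDx, hGD0, hx0, hnorm] at hlow
  rw [hSAMx, hS0, hx0, hnorm] at hup
  simp only [mul_zero, zero_mul, sub_zero] at hlow
  rw [hκB, hκB]
  linarith

/-- SAM solutions are flatter than gradient descent solutions: the sharpness gap
`κ_GD(k) − κ_SAM(k)` of the expected (noiseless) trajectories on the least-squares
loss is bounded below. -/
theorem sam_is_flatter (n p r : ℕ)
    (A : Matrix (Fin n) (Fin p) ℝ)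
    (U1 : Matrix (Fin p) (Fin r) ℝ) (V1 : Matrix (Fin n) (Fin r) ℝ)
    (s : Fin r → ℝ) (hs : ∀ i, 0 < s i)
    (hU : U1ᵀ * U1 = 1) (hV : V1ᵀ * V1 = 1)
    (hA : A = V1 * Matrix.diagonal s * U1ᵀ)
    (d : Fin r → ℝ) (hd : ∀ i, d i = s i ^ 2)
    (dmax dmin : ℝ)
    (hdmax : IsGreatest (Set.range d) dmax)
    (hdmin : IsLeast (Set.range d) dmin)
    (wbar w0 : Fin p → ℝ)
    (hw0proj : w0 = (U1 * U1ᵀ).mulVec w0)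
    (u : Fin r → ℝ) (hu : u = U1ᵀ.mulVec (wbar - w0))
    (η ρ : ℝ) (hη : 0 < η) (hρ : 0 < ρ)
    (hcontr : ∀ i, 0 < 1 - η * d i - η * ρ * d i ^ 2 ∧
        1 - η * d i - η * ρ * d i ^ 2 < 1)
    (ρ0 : ℝ) (hρ0 : 0 < ρ0)
    (G0 : (Fin p → ℝ) → (Fin p → ℝ))
    (hG0 : ∀ w, G0 w = (Aᵀ * A).mulVec (w - wbar))
    (F : (Fin p → ℝ) → ℝ)
    (hF : ∀ w, F w = (1 / 2) * ((w - wbar) ⬝ᵥ (Aᵀ * A).mulVec (w - wbar)))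
    (mSAM mGD : ℕ → Fin p → ℝ)
    (hS0 : mSAM 0 = w0) (hGD0 : mGD 0 = w0)
    (hS : ∀ k, mSAM (k + 1) = mSAM k - η • G0 (mSAM k + ρ • G0 (mSAM k)))
    (hGD : ∀ k, mGD (k + 1) = mGD k - η • G0 (mGD k))
    (κ : (ℕ → Fin p → ℝ) → ℕ → ℝ)
    (hκ : ∀ m k, κ m k
        = sSup ((fun e : Fin p → ℝ => F (m k + e) - F (m k)) ''
            {e | Real.sqrt (∑ i, (e i) ^ 2) ≤ ρ0})) :
    ∀ k : ℕ, 1 ≤ k →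
      ρ0 ^ 2 * (dmin - dmax) / 2
          + ρ0 * (Real.sqrt (∑ i, (1 - η * d i) ^ (2 * k) * d i ^ 2 * u i ^ 2)
              - Real.sqrt (∑ i,
                  (1 - η * d i - η * ρ * d i ^ 2) ^ (2 * k) * d i ^ 2 * u i ^ 2))
        ≤ κ mGD k - κ mSAM k :=
  sam_is_flatter_general n p r A U1 V1 s hU hV hA d hd dmax dmin hdmax hdmin wbar w0 u hu η ρ ρ0 hρ0
    G0 hG0 F hF mSAM mGD hS0 hGD0 hS hGD κ hκ
end
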